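/- arXiv:1504.03838 — 8 statements merged into one kernel-verified Lean document; each statement's English description precedes it below -/
import Mathlib

section
/- Let p be an odd prime and r a positive integer with r ≡ a (mod p-1) where 1 ≤ a ≤ p-1. Then the sum S_r = Σ_{0<j<r, j≡a mod (p-1)} C(r,j) is divisible by p. -/
/-!
Over a finite field `K` with `q` elements, `∑_{x ∈ Kˣ} x ^ i` is `-1` if `q - 1 ∣ i` and `0`
otherwise, so expanding `∑_{x ∈ Kˣ} (x + 1) ^ r * x ^ ((q - 2) * r)` by the binomial theorem
yields minus the sum of `C(r, j)` over `0 ≤ j ≤ r` with `j ≡ r [MOD q - 1]`. Since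
`x ^ (q - 2) = x⁻¹`, the same sum is `∑_{x ∈ Kˣ} (x⁻¹ + 1) ^ r = ∑_{y ≠ 1} y ^ r`, which is
`-1 - [q - 1 ∣ r]`. The two boundary terms `j = r` and (when `q - 1 ∣ r`) `j = 0` account for
exactly this, so the interior terms sum to `0` in `K`; take `K = ZMod p`.
-/

open Finset

theorem Nat.dvd_add_sub_one_mul_iff_modEq {m : ℕ} (hm : 0 < m) (j r : ℕ) :
    m ∣ j + (m - 1) * r ↔ j ≡ r [MOD m] := by
  obtain ⟨n, rfl⟩ := Nat.exists_eq_add_one_of_ne_zero hm.ne'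
  have hn : (n : ZMod (n + 1)) = -1 := by
    rw [eq_neg_iff_add_eq_zero]; exact_mod_cast ZMod.natCast_self (n + 1)
  rw [← ZMod.natCast_eq_zero_iff, ← ZMod.natCast_eq_natCast_iff, Nat.add_sub_cancel]
  push_cast
  rw [hn, neg_one_mul, ← sub_eq_add_neg, sub_eq_zero]

theorem Fintype.sum_eq_add_sum_units {G₀ M : Type*} [GroupWithZero G₀] [Fintype G₀]
    [DecidableEq G₀] [AddCommMonoid M] (f : G₀ → M) : ∑ x, f x = f 0 + ∑ u : G₀ˣ, f u := by
  rw [Fintype.sum_eq_add_sum_subtype_ne f 0]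
  congr 1
  exact (Fintype.sum_equiv unitsEquivNeZero _ _ fun _ => rfl).symm

namespace FiniteField

variable {K : Type*} [Field K] [Fintype K]

local notation "q" => Fintype.card K

theorem sum_units_add_one_pow_mul_pow [DecidableEq K] (r t : ℕ) :
    ∑ x : Kˣ, ((x : K) + 1) ^ r * (x : K) ^ t
      = -∑ j ∈ (range (r + 1)).filter (fun j => q - 1 ∣ j + t), (r.choose j : K) := by
  simp_rw [add_pow, one_pow, mul_one, sum_mul]
  rw [sum_comm, sum_filter, ← sum_neg_distrib]
  refine sum_congr rfl fun j _ => ?_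
  simp_rw [mul_comm _ (r.choose j : K), mul_assoc, ← pow_add, ← mul_sum, sum_pow_units]
  split_ifs <;> simp

theorem sum_units_add_one_pow [DecidableEq K] {r : ℕ} (hr : r ≠ 0) :
    ∑ x : Kˣ, ((x : K) + 1) ^ r = (if q - 1 ∣ r then -1 else 0) - 1 := by
  have hshift : ∑ x : K, (x + 1) ^ r = ∑ x : K, x ^ r :=
    Fintype.sum_equiv (Equiv.addRight 1) _ _ fun _ => rfl
  rw [Fintype.sum_eq_add_sum_units, Fintype.sum_eq_add_sum_units (fun x : K => x ^ r),
    zero_add, one_pow, zero_pow hr, zero_add, sum_pow_units] at hshift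
  linear_combination hshift

theorem add_one_pow_mul_pow_card_sub_two (x : Kˣ) (r : ℕ) :
    ((x : K) + 1) ^ r * (x : K) ^ ((q - 2) * r) = (((x⁻¹ : Kˣ) : K) + 1) ^ r := by
  have hinv : (x : K) ^ (q - 2) = (x : K)⁻¹ := by
    refine eq_inv_of_mul_eq_one_left ?_
    rw [← pow_succ, show q - 2 + 1 = q - 1 by have := Fintype.one_lt_card (α := K); omega]
    exact pow_card_sub_one_eq_one _ x.ne_zero
  rw [pow_mul, ← mul_pow, hinv, Units.val_inv_eq_inv_val, add_mul, mul_inv_cancel₀ x.ne_zero,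
    one_mul, add_comm]

theorem sum_range_choose_filter_modEq {r : ℕ} (hr : r ≠ 0) :
    ∑ j ∈ (range (r + 1)).filter (fun j => j ≡ r [MOD q - 1]), (r.choose j : K)
      = 1 + if q - 1 ∣ r then 1 else 0 := by
  classical
  have hq : 1 < q := Fintype.one_lt_card
  have key : ∑ x : Kˣ, ((x : K) + 1) ^ r * (x : K) ^ ((q - 2) * r)
      = (if q - 1 ∣ r then -1 else 0) - 1 :=
    calc _ = ∑ x : Kˣ, (((x⁻¹ : Kˣ) : K) + 1) ^ r :=
          Fintype.sum_congr _ _ fun x => add_one_pow_mul_pow_card_sub_two x r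
      _ = ∑ x : Kˣ, ((x : K) + 1) ^ r :=
          Equiv.sum_comp (Equiv.inv Kˣ) fun x : Kˣ => ((x : K) + 1) ^ r
      _ = _ := sum_units_add_one_pow hr
  rw [sum_units_add_one_pow_mul_pow, show q - 2 = q - 1 - 1 by omega] at key
  simp_rw [Nat.dvd_add_sub_one_mul_iff_modEq (Nat.sub_pos_of_lt hq)] at key
  rw [neg_eq_iff_eq_neg.mp key]
  split_ifs <;> ring

theorem sum_Ioo_choose_filter_modEq (r : ℕ) :
    ∑ j ∈ (Ioo 0 r).filter (fun j => j ≡ r [MOD q - 1]), (r.choose j : K) = 0 := by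
  rcases Nat.eq_zero_or_pos r with rfl | hr
  · simp
  have h := sum_range_choose_filter_modEq (K := K) hr.ne'
  rw [sum_filter, sum_range_succ, range_eq_Ico, sum_eq_sum_Ico_succ_bot hr,
    Ico_add_one_left_eq_Ioo, ← sum_filter] at h
  have h0 : 0 ≡ r [MOD q - 1] ↔ q - 1 ∣ r := Nat.ModEq.comm.trans Nat.modEq_zero_iff_dvd
  simp only [h0, Nat.ModEq.refl, if_true, Nat.choose_zero_right, Nat.choose_self,
    Nat.cast_one] at h
  split_ifs at h <;> linear_combination h

end FiniteField

theorem stmt_0_general (p r a : ℕ) (hp : p.Prime) (hra : r ≡ a [MOD p - 1]) :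
    (p : ℤ) ∣ ∑ j ∈ (Finset.Ioo 0 r).filter (fun j => j % (p - 1) = a % (p - 1)),
      (r.choose j : ℤ) := by
  have : Fact p.Prime := ⟨hp⟩
  rw [← ZMod.intCast_zmod_eq_zero_iff_dvd]
  push_cast
  rw [← show r % (p - 1) = a % (p - 1) from hra]
  simpa only [ZMod.card, Nat.ModEq] using FiniteField.sum_Ioo_choose_filter_modEq (K := ZMod p) r

theorem stmt_0 (p r a : ℕ) (hp : p.Prime) (hodd : Odd p) (hr : 1 ≤ r)
    (ha1 : 1 ≤ a) (ha2 : a ≤ p - 1) (hra : r ≡ a [MOD p - 1]) :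
    (p : ℤ) ∣ ∑ j ∈ (Finset.Ioo 0 r).filter (fun j => j % (p - 1) = a % (p - 1)),
      (r.choose j : ℤ) :=
  stmt_0_general p r a hp hra
end

section
/- Let p > 2 be prime and r a positive integer with r ≡ a (mod p-1) where 1 ≤ a ≤ p-1. Then (1/p)·Σ_{0<j<r, j≡a mod (p-1)} C(r,j) ≡ (a-r)/a (mod p), i.e., a·Σ_{0<j<r, j≡a mod (p-1)} C(r,j) ≡ p·(a-r) (mod p²). -/
/-!
Write `ω : (ZMod p)ˣ →* ZMod (p ^ 2)` for the Teichmüller character `u ↦ ũ ^ p`, where `ũ` is any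
lift of `u`. Orthogonality of the characters `ω ^ j * ω⁻¹ ^ a` turns the binomial theorem into
`∑ᵤ ω(u)⁻¹ ^ a * (1 + ω u) ^ m = (p - 1) * ∑_{j ≤ m, j ≡ a} C(m, j)`.
For `u ≠ -1` we have `(1 + ω u) ^ (p - 1) ≡ 1 mod p`, so its difference from `1` squares to zero
mod `p²`; for `u = -1` the factor `1 + ω u` vanishes. Either way `(1 + ω u) ^ (a + (p - 1) k)` is
affine in `k`, and comparing coefficients gives
`∑_{0 < j < r, j ≡ a} C(r, j) ≡ k * C(a + p - 1, a) mod p²` for `r = a + (p - 1) k`.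
Finally `a * C(a + p - 1, a) = p * C(p + a - 1, a - 1) ≡ p mod p²` by Lucas, and
`p * (a - r) = -p (p - 1) k ≡ p k`.
-/

open Finset

theorem Finset.sum_monoidHom_eq_zero_of_isUnit_sub_one {G R : Type*} [Group G] [Fintype G]
    [CommRing R] (χ : G →* R) {g : G} (hg : IsUnit (χ g - 1)) : ∑ x, χ x = 0 := by
  have hinv : χ g * ∑ x, χ x = ∑ x, χ x := by
    rw [mul_sum]
    exact Fintype.sum_equiv (Equiv.mulLeft g) _ _ fun x => (map_mul χ g x).symm
  exact hg.mul_right_eq_zero.mp (by rw [sub_mul, one_mul, hinv, sub_self])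

theorem one_add_pow_of_sq_eq_zero {R : Type*} [CommRing R] {y : R} (hy : y ^ 2 = 0) (k : ℕ) :
    (1 + y) ^ k = 1 + k * y := by
  simpa [Polynomial.derivative_X_pow] using
    Polynomial.eval_add_of_sq_eq_zero (Polynomial.X ^ k) 1 y hy

theorem Nat.choose_prime_add_modEq_one {p k : ℕ} [Fact p.Prime] (hk : k < p) :
    (p + k).choose k ≡ 1 [MOD p] := by
  have h := Choose.choose_modEq_choose_mod_mul_choose_div_nat (n := p + k) (k := k) (p := p)
  rwa [Nat.add_mod_left, Nat.mod_eq_of_lt hk, Nat.add_div_of_dvd_right (dvd_refl p),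
    Nat.div_self (Fact.out : p.Prime).pos, Nat.div_eq_of_lt hk, Nat.choose_self,
    Nat.choose_zero_right, mul_one] at h

def residueChooseSum (q a m : ℕ) : ℕ :=
  ∑ j ∈ (Ioo 0 m).filter (· ≡ a [MOD q]), m.choose j

section residueChooseSum

variable {q a m : ℕ}

theorem sum_range_succ_filter_modEq_choose (hm : 0 < m) (hma : m ≡ a [MOD q]) :
    ∑ j ∈ (range (m + 1)).filter (· ≡ a [MOD q]), m.choose j
      = residueChooseSum q a m + (if 0 ≡ a [MOD q] then 1 else 0) + 1 := by
  have hrange : range (m + 1) = insert 0 (insert m (Ioo 0 m)) := by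
    ext j
    simp only [mem_range, mem_insert, mem_Ioo]
    omega
  rw [residueChooseSum, sum_filter, sum_filter, hrange, sum_insert (by simp; omega),
    sum_insert (by simp), if_pos hma, Nat.choose_self, Nat.choose_zero_right]
  split_ifs <;> ring

theorem eq_of_modEq_of_mem_Ioo {j : ℕ} (ha : a ≤ q) (hj : j ∈ Ioo 0 (a + q))
    (hja : j ≡ a [MOD q]) : j = a := by
  rw [mem_Ioo] at hj
  exact hja.eq_of_abs_lt (abs_sub_lt_iff.mpr ⟨by omega, by omega⟩)

theorem residueChooseSum_self (ha : a ≤ q) : residueChooseSum q a a = 0 :=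
  sum_eq_zero fun j hj => by
    rw [mem_filter, mem_Ioo] at hj
    exact absurd (eq_of_modEq_of_mem_Ioo ha (mem_Ioo.mpr ⟨hj.1.1, by omega⟩) hj.2) (by omega)

theorem residueChooseSum_add_self (ha0 : 0 < a) (ha : a ≤ q) :
    residueChooseSum q a (a + q) = (a + q).choose a :=
  sum_eq_single_of_mem a (mem_filter.mpr ⟨mem_Ioo.mpr ⟨ha0, by omega⟩, rfl⟩)
    fun j hj hne => absurd (eq_of_modEq_of_mem_Ioo ha (mem_filter.mp hj).1 (mem_filter.mp hj).2) hne

end residueChooseSum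

namespace ZMod

theorem natCast_mul_eq_of_modEq {p x y : ℕ} (h : x ≡ y [MOD p]) :
    (p : ZMod (p ^ 2)) * x = p * y := by
  rw [← Nat.cast_mul, ← Nat.cast_mul, natCast_eq_natCast_iff, sq]
  exact h.mul_left' p

def reduceModSq (p : ℕ) : ZMod (p ^ 2) →+* ZMod p :=
  castHom (dvd_pow_self p two_ne_zero) (ZMod p)

section reduceModSq

variable {p : ℕ} [Fact p.Prime]

theorem reduceModSq_natCast_val (x : ZMod p) : reduceModSq p x.val = x := by
  rw [map_natCast, natCast_zmod_val]

theorem reduceModSq_eq_zero_iff {z : ZMod (p ^ 2)} :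
    reduceModSq p z = 0 ↔ (p : ZMod (p ^ 2)) ∣ z := by
  constructor
  · intro hz
    obtain ⟨m, hm⟩ : p ∣ z.val := by
      rw [← natCast_eq_zero_iff, ← hz]
      conv_rhs => rw [← natCast_zmod_val z]
      rw [map_natCast]
    exact ⟨m, by rw [← natCast_zmod_val z, hm, Nat.cast_mul]⟩
  · rintro ⟨w, rfl⟩
    rw [map_mul, map_natCast, natCast_self, zero_mul]

theorem sq_eq_zero_of_reduceModSq_eq_zero {z : ZMod (p ^ 2)} (hz : reduceModSq p z = 0) :
    z ^ 2 = 0 := by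
  obtain ⟨w, rfl⟩ := reduceModSq_eq_zero_iff.mp hz
  rw [mul_pow, ← Nat.cast_pow, natCast_self, zero_mul]

theorem isUnit_of_reduceModSq_ne_zero {z : ZMod (p ^ 2)} (hz : reduceModSq p z ≠ 0) :
    IsUnit z := by
  obtain ⟨y, hy⟩ := ringHom_surjective (reduceModSq p) (reduceModSq p z)⁻¹
  have hnil : IsNilpotent (z * y - 1) := ⟨2, sq_eq_zero_of_reduceModSq_eq_zero <| by
    rw [map_sub, map_mul, hy, mul_inv_cancel₀ hz, map_one, sub_self]⟩
  exact isUnit_of_mul_isUnit_left (by simpa using hnil.isUnit_add_one)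

theorem pow_eq_pow_of_reduceModSq_eq {x y : ZMod (p ^ 2)}
    (h : reduceModSq p x = reduceModSq p y) : x ^ p = y ^ p := by
  have := dvd_sub_pow_of_dvd_sub (reduceModSq_eq_zero_iff.mp (by rw [map_sub, h, sub_self] :
    reduceModSq p (x - y) = 0)) 1
  rwa [pow_one, ← Nat.cast_pow, natCast_self, zero_dvd_iff, sub_eq_zero] at this

theorem isUnit_natCast_sub_one : IsUnit ((p - 1 : ℕ) : ZMod (p ^ 2)) := by
  apply isUnit_of_reduceModSq_ne_zero
  rw [map_natCast, Nat.cast_sub (Fact.out : p.Prime).one_le, natCast_self, Nat.cast_one, zero_sub,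
    neg_ne_zero]
  exact one_ne_zero

theorem units_pow_eq_pow_iff_modEq {j a : ℕ} :
    (∀ u : (ZMod p)ˣ, u ^ j = u ^ a) ↔ j ≡ a [MOD p - 1] := by
  obtain ⟨g, hg⟩ := IsCyclic.exists_ofOrder_eq_natCard (α := (ZMod p)ˣ)
  rw [Nat.card_eq_fintype_card, card_units] at hg
  refine ⟨fun h => hg ▸ pow_eq_pow_iff_modEq.mp (h g), fun h u => pow_eq_pow_iff_modEq.mpr ?_⟩
  exact h.of_dvd (card_units p ▸ orderOf_dvd_card)

theorem natCast_mul_choose_add_sub_one {a : ℕ} (ha0 : 0 < a) (ha : a ≤ p) :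
    (a : ZMod (p ^ 2)) * (a + (p - 1)).choose a = p := by
  have hchoose : a * (a + (p - 1)).choose a = p * (a + (p - 1)).choose (a - 1) := by
    have := Nat.choose_succ_right_eq (a + (p - 1)) (a - 1)
    rw [Nat.sub_add_cancel ha0, show a + (p - 1) - (a - 1) = p by omega] at this
    rw [mul_comm, this, mul_comm]
  have hmod : (a + (p - 1)).choose (a - 1) ≡ 1 [MOD p] := by
    rw [show a + (p - 1) = p + (a - 1) by omega]
    exact Nat.choose_prime_add_modEq_one (by omega)
  rw [← Nat.cast_mul, hchoose, Nat.cast_mul, natCast_mul_eq_of_modEq hmod, Nat.cast_one, mul_one]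

end reduceModSq

def teichmullerModSq (p : ℕ) [Fact p.Prime] : (ZMod p)ˣ →* ZMod (p ^ 2) where
  toFun u := ((u : ZMod p).val : ZMod (p ^ 2)) ^ p
  map_one' := by rw [Units.val_one, val_one, Nat.cast_one, one_pow]
  map_mul' u v := by
    rw [← mul_pow]
    apply pow_eq_pow_of_reduceModSq_eq
    rw [map_mul, reduceModSq_natCast_val, reduceModSq_natCast_val, reduceModSq_natCast_val,
      Units.val_mul]

section teichmullerModSq

variable {p : ℕ} [Fact p.Prime]

theorem reduceModSq_teichmullerModSq (u : (ZMod p)ˣ) :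
    reduceModSq p (teichmullerModSq p u) = u := by
  rw [teichmullerModSq, MonoidHom.coe_mk, OneHom.coe_mk, map_pow, reduceModSq_natCast_val,
    pow_card]

theorem teichmullerModSq_neg_one (hp : p ≠ 2) : teichmullerModSq p (-1) = -1 := by
  set x := teichmullerModSq p (-1)
  have hsq : (x - 1) * (x + 1) = 0 := by
    rw [mul_comm, ← sq_sub_sq, one_pow, ← map_pow, neg_one_sq, map_one, sub_self]
  have hunit : IsUnit (x - 1) := by
    apply isUnit_of_reduceModSq_ne_zero
    rw [map_sub, reduceModSq_teichmullerModSq, map_one, Units.val_neg, Units.val_one, sub_ne_zero]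
    exact Ring.neg_one_ne_one_of_char_ne_two (by rwa [ringChar_zmod_n])
  exact eq_neg_of_add_eq_zero_left (hunit.mul_right_eq_zero.mp hsq)

theorem sum_teichmullerModSq_pow_mul_inv_pow (j a : ℕ) :
    ∑ u : (ZMod p)ˣ, teichmullerModSq p u ^ j * teichmullerModSq p u⁻¹ ^ a
      = if j ≡ a [MOD p - 1] then ((p - 1 : ℕ) : ZMod (p ^ 2)) else 0 := by
  let ψ : (ZMod p)ˣ →* (ZMod p)ˣ := powMonoidHom j * (powMonoidHom a)⁻¹
  have hψ (u) : teichmullerModSq p u ^ j * teichmullerModSq p u⁻¹ ^ a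
      = (teichmullerModSq p).comp ψ u := by
    rw [MonoidHom.comp_apply, MonoidHom.mul_apply, MonoidHom.inv_apply, powMonoidHom_apply,
      powMonoidHom_apply, map_mul, map_pow, ← inv_pow, map_pow]
  simp only [hψ]
  split_ifs with h
  · have : ψ = 1 := by
      ext u
      simp [ψ, units_pow_eq_pow_iff_modEq.mpr h u]
    rw [this, MonoidHom.comp_one]
    simp only [MonoidHom.one_apply, sum_const, card_univ, card_units, nsmul_eq_mul, mul_one]
  · obtain ⟨g, hg⟩ : ∃ g, ψ g ≠ 1 := by
      by_contra! hψ1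
      exact h (units_pow_eq_pow_iff_modEq.mp fun u => by simpa [ψ, mul_inv_eq_one] using hψ1 u)
    apply Finset.sum_monoidHom_eq_zero_of_isUnit_sub_one _ (g := g)
    apply isUnit_of_reduceModSq_ne_zero
    rwa [map_sub, map_one, MonoidHom.comp_apply, reduceModSq_teichmullerModSq, sub_ne_zero, Ne,
      Units.val_eq_one]

theorem sum_teichmullerModSq_inv_pow_mul_one_add_pow (a m : ℕ) :
    ∑ u : (ZMod p)ˣ, teichmullerModSq p u⁻¹ ^ a * (1 + teichmullerModSq p u) ^ m
      = ((p - 1 : ℕ) : ZMod (p ^ 2)) *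
          ∑ j ∈ (range (m + 1)).filter (· ≡ a [MOD p - 1]), (m.choose j : ZMod (p ^ 2)) := by
  simp_rw [add_comm (1 : ZMod (p ^ 2)), add_pow, one_pow, mul_one, mul_sum, sum_filter]
  rw [sum_comm]
  refine sum_congr rfl fun j _ => ?_
  have := congrArg (· * (m.choose j : ZMod (p ^ 2))) (sum_teichmullerModSq_pow_mul_inv_pow j a)
  simp only [sum_mul, ite_mul, zero_mul] at this
  rw [← this]
  exact sum_congr rfl fun _ _ => by ring

theorem one_add_teichmullerModSq_pow_add_mul (hp : p ≠ 2) (u : (ZMod p)ˣ) {a : ℕ} (ha : a ≠ 0)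
    (k : ℕ) :
    (1 + teichmullerModSq p u) ^ (a + (p - 1) * k) = (1 + teichmullerModSq p u) ^ a +
      k * ((1 + teichmullerModSq p u) ^ (a + (p - 1)) - (1 + teichmullerModSq p u) ^ a) := by
  by_cases hu : u = -1
  · have hz : 1 + teichmullerModSq p u = 0 := by
      rw [hu, teichmullerModSq_neg_one hp, add_neg_cancel]
    rw [hz, zero_pow ha, zero_pow (by omega), zero_pow (by omega), sub_zero, mul_zero, add_zero]
  · set z := 1 + teichmullerModSq p u
    have hy : (z ^ (p - 1) - 1) ^ 2 = 0 := by
      apply sq_eq_zero_of_reduceModSq_eq_zero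
      rw [map_sub, map_pow, map_add, map_one, reduceModSq_teichmullerModSq,
        pow_card_sub_one_eq_one, sub_self]
      exact fun h => hu (Units.ext (by
        rw [Units.val_neg, Units.val_one]; exact eq_neg_of_add_eq_zero_right h))
    rw [pow_add, pow_mul, pow_add, ← add_sub_cancel (1 : ZMod (p ^ 2)) (z ^ (p - 1)),
      one_add_pow_of_sq_eq_zero hy]
    ring

theorem residueChooseSum_add_mul (hp : p ≠ 2) {a : ℕ} (ha0 : 0 < a) (ha : a ≤ p - 1) (k : ℕ) :
    (residueChooseSum (p - 1) a (a + (p - 1) * k) : ZMod (p ^ 2))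
      = k * (a + (p - 1)).choose a := by
  let E (m : ℕ) := ∑ u : (ZMod p)ˣ, teichmullerModSq p u⁻¹ ^ a * (1 + teichmullerModSq p u) ^ m
  have hE (m : ℕ) (hm : 0 < m) (hma : m ≡ a [MOD p - 1]) : E m = ((p - 1 : ℕ) : ZMod (p ^ 2)) *
      (residueChooseSum (p - 1) a m + ((if 0 ≡ a [MOD p - 1] then 1 else 0) + 1 : ℕ)) := by
    dsimp only [E]
    rw [sum_teichmullerModSq_inv_pow_mul_one_add_pow, ← Nat.cast_sum,
      sum_range_succ_filter_modEq_choose hm hma, add_assoc, Nat.cast_add]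
  have hrec : E (a + (p - 1) * k) = E a + k * (E (a + (p - 1)) - E a) := by
    dsimp only [E]
    rw [← sum_sub_distrib, mul_sum, ← sum_add_distrib]
    refine sum_congr rfl fun u _ => ?_
    rw [one_add_teichmullerModSq_pow_add_mul hp u ha0.ne']
    ring
  rw [hE _ (by omega) (Nat.ModEq.refl a), hE _ (by omega) Nat.add_modEq_right,
    hE _ (by omega) (Nat.add_mul_mod_self_left a (p - 1) k), residueChooseSum_self ha,
    residueChooseSum_add_self ha0 ha] at hrec
  apply isUnit_natCast_sub_one.mul_left_cancel
  push_cast at hrec ⊢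
  linear_combination hrec

end teichmullerModSq

end ZMod

theorem stmt_1 (p r a : ℕ) (hp : p.Prime) (hp2 : 2 < p) (hr : 1 ≤ r)
    (ha1 : 1 ≤ a) (ha2 : a ≤ p - 1) (hra : r ≡ a [MOD p - 1]) :
    ((p : ℤ)^2) ∣ (a : ℤ) * (∑ j ∈ (Finset.Ioo 0 r).filter
        (fun j => j % (p - 1) = a % (p - 1)), (r.choose j : ℤ))
      - (p : ℤ) * ((a : ℤ) - (r : ℤ)) := by
  have : Fact p.Prime := ⟨hp⟩
  have hsum : ∑ j ∈ (Ioo 0 r).filter (fun j => j % (p - 1) = a % (p - 1)), (r.choose j : ℤ)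
      = residueChooseSum (p - 1) a r := by
    rw [residueChooseSum, Nat.cast_sum]
    rfl
  rw [hsum]
  obtain ⟨k, rfl⟩ : ∃ k, r = a + (p - 1) * k := by
    have hle : a ≤ r := hra.symm.le_of_lt_add (by omega)
    obtain ⟨k, hk⟩ := (Nat.modEq_iff_dvd' hle).mp hra.symm
    exact ⟨k, by omega⟩
  have hS := ZMod.residueChooseSum_add_mul hp2.ne' ha1 ha2 k
  have hchoose := ZMod.natCast_mul_choose_add_sub_one ha1 (p := p) (by omega)
  have hpp : (p : ZMod (p ^ 2)) ^ 2 = 0 := by rw [← Nat.cast_pow, ZMod.natCast_self]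
  rw [← Nat.cast_pow, ← ZMod.intCast_zmod_eq_zero_iff_dvd]
  push_cast [Nat.cast_sub hp.one_le]
  linear_combination (a : ZMod (p ^ 2)) * hS + (k : ZMod (p ^ 2)) * (hchoose + hpp)
end

section
/- Let p ≥ 3 be prime. If s is a positive integer with s ≡ 1 (mod p-1) and t = v_p(s-1) is the p-adic valuation of s-1, then for all i ≥ 2, p^i · C(s,i) ≡ 0 (mod p^{t+2}). -/
/-!
Write `s = m + 2` and `i = j + 2`. The identity `C(s, i) · i (i - 1) = s (s - 1) C(s - 2, i - 2)`
shows that `p ^ t`, which divides `s - 1`, divides `C(s, i) · i (i - 1)`. Since `i` and `i - 1` are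
coprime, `p ^ v_p(i (i - 1))` divides one of them, so is at most `i`; as `p ≥ 3`, this forces
`v_p(i (i - 1)) ≤ i - 2`. Hence `t ≤ v_p(C(s, i)) + i - 2`.
-/

theorem Nat.add_two_choose_add_two_mul (m j : ℕ) :
    (m + 2).choose (j + 2) * ((j + 2) * (j + 1)) = (m + 2) * (m + 1) * m.choose j := by
  rw [← mul_assoc, ← Nat.add_one_mul_choose_eq (m + 1) (j + 1), mul_assoc,
    ← Nat.add_one_mul_choose_eq m j, mul_assoc]

theorem add_two_le_of_pow_le {p v n : ℕ} (hp : 3 ≤ p) (hn : 2 ≤ n) (h : p ^ v ≤ n) :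
    v + 2 ≤ n := by
  rcases Nat.eq_zero_or_pos v with rfl | hv
  · omega
  have bernoulli : 1 + v * 2 ≤ 3 ^ v :=
    one_add_mul_le_pow_of_sq_nonneg (Nat.zero_le _) (Nat.zero_le _) (Nat.zero_le _) v
  have : 3 ^ v ≤ p ^ v := Nat.pow_le_pow_left hp v
  omega

theorem padicValNat_add_two_mul_add_one_le {p : ℕ} [hp : Fact p.Prime] (hp3 : 3 ≤ p) (k : ℕ) :
    padicValNat p ((k + 2) * (k + 1)) ≤ k := by
  set v := padicValNat p ((k + 2) * (k + 1))
  rcases Nat.eq_zero_or_pos v with hv | hv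
  · omega
  have hcop : Nat.Coprime (k + 2) (k + 1) := Nat.coprime_self_add_left.mpr (Nat.coprime_one_left _)
  have hle : p ^ v ≤ k + 2 := by
    rcases (hcop.isPrimePow_dvd_mul (hp.out.isPrimePow.pow hv.ne')).mp pow_padicValNat_dvd with
      h | h
    · exact Nat.le_of_dvd (by omega) h
    · exact (Nat.le_of_dvd (by omega) h).trans (by omega)
  have := add_two_le_of_pow_le hp3 (by omega) hle
  omega

theorem padicValNat_add_one_le_padicValNat_choose {p : ℕ} [Fact p.Prime] (hp3 : 3 ≤ p)
    {m j : ℕ} (hjm : j ≤ m) :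
    padicValNat p (m + 1) ≤ padicValNat p ((m + 2).choose (j + 2)) + j := by
  have hC : (m + 2).choose (j + 2) ≠ 0 := (Nat.choose_pos (by omega)).ne'
  have hdvd : p ^ padicValNat p (m + 1) ∣ (m + 2).choose (j + 2) * ((j + 2) * (j + 1)) := by
    rw [Nat.add_two_choose_add_two_mul]
    exact pow_padicValNat_dvd.trans (dvd_mul_of_dvd_left (dvd_mul_left _ _) _)
  have hval := (padicValNat_dvd_iff_le (by positivity)).mp hdvd
  rw [padicValNat.mul hC (by positivity)] at hval
  have := padicValNat_add_two_mul_add_one_le hp3 j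
  omega

theorem stmt_3_general (p s : ℕ) (hp : p.Prime) (hp3 : 3 ≤ p)
    (t : ℕ) (ht : t = padicValNat p (s - 1)) :
    ∀ i : ℕ, 2 ≤ i → (p : ℤ)^(t + 2) ∣ (p : ℤ)^i * (s.choose i : ℤ) := by
  have := Fact.mk hp
  intro i hi
  rcases Nat.lt_or_ge s i with hsi | his
  · simp [Nat.choose_eq_zero_of_lt hsi]
  obtain ⟨m, rfl⟩ : ∃ m, s = m + 2 := ⟨s - 2, by omega⟩
  obtain ⟨j, rfl⟩ : ∃ j, i = j + 2 := ⟨i - 2, by omega⟩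
  have hval := padicValNat_add_one_le_padicValNat_choose hp3 (by omega : j ≤ m)
  have hC : (m + 2).choose (j + 2) ≠ 0 := (Nat.choose_pos his).ne'
  have hpow : p ^ (j + 2) ≠ 0 := pow_ne_zero _ hp.ne_zero
  have hdvd : p ^ (padicValNat p (m + 1) + 2) ∣ p ^ (j + 2) * (m + 2).choose (j + 2) := by
    rw [padicValNat_dvd_iff_le (mul_ne_zero hpow hC), padicValNat.mul hpow hC,
      padicValNat.prime_pow]
    omega
  rw [ht, show m + 2 - 1 = m + 1 by omega]
  exact_mod_cast hdvd

theorem stmt_3 (p s : ℕ) (hp : p.Prime) (hp3 : 3 ≤ p) (hs : 1 ≤ s)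
    (hs1 : s ≡ 1 [MOD p - 1]) (t : ℕ) (ht : t = padicValNat p (s - 1)) :
    ∀ i : ℕ, 2 ≤ i → (p : ℤ)^(t + 2) ∣ (p : ℤ)^i * (s.choose i : ℤ) :=
  stmt_3_general p s hp hp3 t ht
end

section
/- Let p > 3 be prime. If r is an integer with r ≡ 2 (mod p-1) and t = v_p(r-2) is the p-adic valuation of r-2, then for all i ≥ 3, p^i · C(r,i) ≡ 0 (mod p^{t+3}). -/
/-!
Write `v = v_p`. From `C(r,i) C(i,3) = C(r,3) C(r-3,i-3)` and `r - 2 ∣ r(r-1)(r-2) = 6 C(r,3)` with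
`p ∤ 6` we get `p^t ∣ C(r,i) C(i,3)`. Since `v(C(i,3)) ≤ log_p i ≤ i - 3` for `p ≥ 5`, the cofactor
`C(i,3)` costs at most `i - 3` powers of `p`, so `p^t ∣ p^(i-3) C(r,i)`.
-/

namespace Nat

theorem lt_pow_sub_two {b i : ℕ} (hb : 4 ≤ b) (hi : 3 ≤ i) : i < b ^ (i - 2) := by
  induction i, hi using Nat.le_induction with
  | base => simp only [Nat.reduceSub, pow_one]; omega
  | succ n hn ih =>
    have hpow : b ^ (n + 1 - 2) = b ^ (n - 2) * b := by
      rw [← pow_succ]; congr 1; omega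
    rw [hpow]
    nlinarith

theorem factorization_choose_le_sub_three {p i k : ℕ} (hp : 4 ≤ p) (hi : 3 ≤ i) :
    (i.choose k).factorization p ≤ i - 3 := by
  have hlog : log p i < i - 2 := log_lt_of_lt_pow (by omega) (lt_pow_sub_two hp hi)
  have := factorization_choose_le_log (n := i) (k := k) (p := p)
  omega

theorem pow_factorization_sub_two_dvd_choose_three {p : ℕ} (hp : p.Coprime 6) (r : ℕ) :
    p ^ (r - 2).factorization p ∣ r.choose 3 := by
  have hsub : r - 2 ∣ 6 * r.choose 3 := by
    have hdesc : r.descFactorial 3 = r * (r - 1) * (r - 2) := by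
      simp only [descFactorial_succ, descFactorial_zero, Nat.sub_zero]; ring
    rw [show 6 = (3 : ℕ)! from rfl, ← descFactorial_eq_factorial_mul_choose, hdesc]
    exact Dvd.intro_left _ rfl
  exact (Coprime.pow_left _ hp).dvd_of_dvd_mul_left ((ordProj_dvd (r - 2) p).trans hsub)

theorem pow_dvd_pow_mul_of_pow_dvd_mul {p t s n m : ℕ} (hp : p.Prime) (hm : m ≠ 0)
    (hs : m.factorization p ≤ s) (h : p ^ t ∣ n * m) : p ^ t ∣ p ^ s * n := by
  rw [← ordProj_mul_ordCompl_eq_self m p, ← mul_assoc] at h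
  have hcop : Coprime (p ^ t) (ordCompl[p] m) :=
    Coprime.pow_left _ ((Prime.coprime_iff_not_dvd hp).2 (not_dvd_ordCompl hp hm))
  rw [mul_comm]
  exact (hcop.dvd_of_dvd_mul_right h).trans (mul_dvd_mul_left n (pow_dvd_pow p hs))

end Nat

theorem stmt_4_general (p r : ℕ) (hp : p.Prime) (hp3 : 3 < p) (t : ℕ) (ht : t = padicValNat p (r - 2)) :
    ∀ i : ℕ, 3 ≤ i → (p : ℤ)^(t + 3) ∣ (p : ℤ)^i * (r.choose i : ℤ) := by
  intro i hi
  suffices h : p ^ t ∣ p ^ (i - 3) * r.choose i by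
    have hsplit : p ^ i * r.choose i = p ^ 3 * (p ^ (i - 3) * r.choose i) := by
      rw [← mul_assoc, ← pow_add, Nat.add_sub_cancel' hi]
    have : p ^ (t + 3) ∣ p ^ i * r.choose i := by
      rw [hsplit, pow_add, mul_comm]
      exact mul_dvd_mul_left _ h
    exact_mod_cast this
  have hp6 : p.Coprime 6 :=
    Nat.Coprime.mul_right ((Nat.coprime_primes hp Nat.prime_two).2 (by omega))
      ((Nat.coprime_primes hp Nat.prime_three).2 (by omega))
  have hchoose : p ^ t ∣ r.choose i * i.choose 3 := by
    rw [Nat.choose_mul hi, ht, ← Nat.factorization_def _ hp]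
    exact (Nat.pow_factorization_sub_two_dvd_choose_three hp6 r).mul_right _
  exact Nat.pow_dvd_pow_mul_of_pow_dvd_mul hp (Nat.choose_pos hi).ne'
    (Nat.factorization_choose_le_sub_three (by omega) hi) hchoose

theorem stmt_4 (p r : ℕ) (hp : p.Prime) (hp3 : 3 < p) (hr : 2 < r)
    (hr2 : r ≡ 2 [MOD p - 1]) (t : ℕ) (ht : t = padicValNat p (r - 2)) :
    ∀ i : ℕ, 3 ≤ i → (p : ℤ)^(t + 3) ∣ (p : ℤ)^i * (r.choose i : ℤ) :=
  stmt_4_general p r hp hp3 t ht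
end

section
/- Let p > 3 be prime and write r = 2 + n(p-1)p^t with t ≥ 0 and n ≥ 0. Then Σ_{0<j<r, j≡2 mod (p-1)} j·C(r,j) ≡ pr(2-r)/(1-p) (mod p^{t+2}). -/
open Finset

lemma pe8_aux2' (x y : ℤ) (m : ℕ) :
    y^3 ∣ (x+y)^(m+2) - x^(m+2) - (m+2) * x^(m+1) * y - ((m+2).choose 2 : ℤ) * x^m * y^2 := by
  induction m with
  | zero => norm_num; ring_nf; simp
  | succ m ih =>
    obtain ⟨A, hA⟩ := ih
    refine ⟨(((m+2).choose 2 : ℤ)) * x^m + A * (x+y), ?_⟩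
    have hch : ((m+3).choose 2 : ℤ) = ((m+2).choose 2 : ℤ) + (m+2) := by
      have : (m+3).choose 2 = (m+2).choose 2 + (m+2) := by
        rw [Nat.choose_succ_succ (m+2) 1, Nat.choose_one_right]; ring
      exact_mod_cast this
    have h2 : (x+y)^(m+3) = ((x+y)^(m+2)) * (x+y) := by ring
    have h3 : (x+y)^(m+2) = x^(m+2) + (m+2) * x^(m+1) * y + ((m+2).choose 2 : ℤ) * x^m * y^2 + y^3 * A := by linarith [hA]
    rw [h2, h3, hch]
    push_cast
    ring

lemma pe8_aux2 (x y : ℤ) (m : ℕ) :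
    y^3 ∣ (x+y)^m - x^m - m * x^(m-1) * y - (m.choose 2 : ℤ) * x^(m-2) * y^2 := by
  match m with
  | 0 => norm_num
  | 1 => norm_num
  | (m+2) => exact pe8_aux2' x y m

lemma pe8_aux1 (x y : ℤ) (m : ℕ) :
    y^2 ∣ (x+y)^m - x^m - m * x^(m-1) * y := by
  obtain ⟨A, hA⟩ := pe8_aux2 x y m
  exact ⟨(m.choose 2 : ℤ) * x^(m-2) + y * A, by linarith [hA]⟩

lemma pe8_helper (p : ℕ) (hp : p.Prime) (hp3 : 3 < p) (y : ℤ) (m : ℕ) (hm : 1 ≤ m)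
    (hy : (p:ℤ)^m ∣ y) : ((p:ℤ)^(2*m+1)) ∣ (1+y)^p - 1 - p*y := by
  obtain ⟨A, hA⟩ := pe8_aux2 1 y p
  have h1 : (1+y)^p - 1 - p*y = (p.choose 2 : ℤ) * y^2 + y^3 * A := by
    simp only [one_pow, mul_one] at hA ⊢
    linarith [hA]
  rw [h1]
  obtain ⟨C, hC⟩ : (p:ℤ) ∣ (p.choose 2 : ℤ) := by
    exact_mod_cast Int.natCast_dvd_natCast.mpr (hp.dvd_choose_self (by norm_num) (by omega))
  obtain ⟨d, hd⟩ := hy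
  have h2 : ((p:ℤ)^(2*m+1)) ∣ (p.choose 2 : ℤ) * y^2 := by
    refine ⟨C * d^2, ?_⟩
    rw [hC, hd]
    ring
  have h3 : ((p:ℤ)^(2*m+1)) ∣ y^3 * A := by
    refine ⟨(p:ℤ)^(m-1) * d^3 * A, ?_⟩
    rw [hd]
    have h3m : m*3 = (2*m+1)+(m-1) := by omega
    rw [mul_pow, ← pow_mul, h3m, pow_add]
    ring
  exact dvd_add h2 h3

lemma pe8_aux3 (p : ℕ) (hp : p.Prime) (hp3 : 3 < p) (a : ℤ) (t : ℕ) :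
    ((p:ℤ)^(t+2)) ∣ (1 + (p:ℤ)*a)^(p^t) - (1 + (p:ℤ)^(t+1)*a) := by
  induction t with
  | zero => norm_num
  | succ t ih =>
    obtain ⟨b, hb⟩ := ih
    set y : ℤ := (p:ℤ)^(t+1)*a + (p:ℤ)^(t+2)*b with hy
    have hX : (1 + (p:ℤ)*a)^(p^t) = 1 + y := by rw [hy]; linarith [hb]
    have hyd : (p:ℤ)^(t+1) ∣ y := by
      refine dvd_add ⟨a, rfl⟩ ⟨(p:ℤ)*b, ?_⟩; rw [pow_succ]; ring
    have h1 := pe8_helper p hp hp3 y (t+1) (by omega) hyd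
    have h2 : (1 + (p:ℤ)*a)^(p^(t+1)) = (1+y)^p := by
      rw [pow_succ, pow_mul, hX]
    have h3 : ((p:ℤ)^(t+3)) ∣ (1+y)^p - 1 - (p:ℤ)*y :=
      (pow_dvd_pow (p:ℤ) (by omega)).trans h1
    have h4 : (1+y)^p - (1 + (p:ℤ)^(t+2)*a) =
        ((1+y)^p - 1 - (p:ℤ)*y) + (p:ℤ)^(t+3)*b := by rw [hy]; ring
    have h5 : t+1+2 = t+3 := by omega
    rw [h2, h5, h4]
    exact dvd_add h3 ⟨b, rfl⟩

lemma pe8_sum_units_val {β : Type*} [AddCommMonoid β] (p : ℕ) [Fact p.Prime] (f : ℕ → β) :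
    ∑ x : (ZMod p)ˣ, f (x : ZMod p).val = ∑ c ∈ Finset.Icc 1 (p-1), f c := by
  have hp := (Fact.out : p.Prime)
  classical
  let ψ : (ZMod p)ˣ ↪ ℕ := ⟨fun x => (x : ZMod p).val,
    fun x y h => Units.ext (ZMod.val_injective p h)⟩
  have hset : Finset.univ.map ψ = Finset.Icc 1 (p-1) := by
    ext c
    simp only [Finset.mem_map, Finset.mem_univ, true_and, Finset.mem_Icc, ψ,
      Function.Embedding.coeFn_mk]
    constructor
    · rintro ⟨x, rfl⟩
      have h0 : (x : ZMod p) ≠ 0 := x.ne_zero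
      have h1 : (x : ZMod p).val ≠ 0 := fun h => h0 (by rwa [ZMod.val_eq_zero] at h)
      have h2 : (x : ZMod p).val < p := ZMod.val_lt _
      show 1 ≤ (x : ZMod p).val ∧ (x : ZMod p).val ≤ p-1
      omega
    · rintro ⟨h1, h2⟩
      have hcp : (c : ZMod p) ≠ 0 := by
        rw [Ne, ZMod.natCast_eq_zero_iff]
        intro hd
        have := Nat.le_of_dvd (by omega) hd
        omega
      refine ⟨(isUnit_iff_ne_zero.mpr hcp).unit, ?_⟩
      show ((isUnit_iff_ne_zero.mpr hcp).unit : ZMod p).val = c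
      rw [IsUnit.unit_spec]
      exact ZMod.val_natCast_of_lt (by have := hp.two_le; omega)
  rw [← hset, Finset.sum_map]
  rfl

lemma pe8_sum_pow_Icc (p : ℕ) [Fact p.Prime] (m : ℕ) :
    ∑ c ∈ Finset.Icc 1 (p-1), ((c : ZMod p))^m = if (p-1) ∣ m then -1 else 0 := by
  classical
  rw [← pe8_sum_units_val p (fun c => ((c : ZMod p))^m)]
  have h1 : ∀ x : (ZMod p)ˣ, (((x : ZMod p).val : ZMod p))^m = ((x:ZMod p))^m := by
    intro x; rw [ZMod.natCast_val, ZMod.cast_id]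
  rw [Finset.sum_congr rfl (fun x _ => h1 x)]
  have := FiniteField.sum_pow_units (ZMod p) m
  rwa [ZMod.card] at this

lemma pe8_teich (p t : ℕ) (a b : ℕ) (hab : a ≡ b [MOD p]) :
    ((a : ZMod (p^(t+2))))^(p^(t+1)) = ((b : ZMod (p^(t+2))))^(p^(t+1)) := by
  have h0 : ((p:ℤ)) ∣ (a:ℤ) - (b:ℤ) := ((Int.natCast_modEq_iff.mpr hab).symm).dvd
  have h1 : ((p : ZMod (p^(t+2)))) ∣ ((a : ZMod (p^(t+2)))) - b := by
    obtain ⟨k, hk⟩ := h0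
    refine ⟨((k:ℤ) : ZMod (p^(t+2))), ?_⟩
    have h2 := congrArg (fun z : ℤ => (z : ZMod (p^(t+2)))) hk
    push_cast at h2
    exact h2
  have h2 := dvd_sub_pow_of_dvd_sub h1 (t+1)
  have h3 : ((p : ZMod (p^(t+2))))^(t+1+1) = 0 := by
    rw [← Nat.cast_pow, ZMod.natCast_self]
  rw [h3, zero_dvd_iff, sub_eq_zero] at h2
  exact h2

lemma pe8_orth (p t : ℕ) [Fact p.Prime] (hp3 : 3 < p) (m : ℕ) :
    ∑ c ∈ Finset.Icc 1 (p-1), ((c : ZMod (p^(t+2))))^(p^(t+1) * m)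
      = if (p-1) ∣ m then ((p : ZMod (p^(t+2))) - 1) else 0 := by
  classical
  have hp := (Fact.out : p.Prime)
  haveI : NeZero (p^(t+2)) := ⟨pow_ne_zero _ hp.ne_zero⟩
  rw [← pe8_sum_units_val p (fun c => ((c : ZMod (p^(t+2))))^(p^(t+1) * m))]
  set M := p^(t+2) with hM
  by_cases hd : (p-1) ∣ m
  · obtain ⟨k, rfl⟩ := hd
    rw [if_pos ⟨k, rfl⟩]
    have hterm : ∀ x : (ZMod p)ˣ, (((x:ZMod p).val : ZMod M))^(p^(t+1) * ((p-1)*k)) = 1 := by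
      intro x
      have hvn : ¬ p ∣ (x : ZMod p).val := by
        intro hdvd
        have h2 : (x : ZMod p).val < p := ZMod.val_lt _
        have h1 : (x : ZMod p).val ≠ 0 := fun h =>
          x.ne_zero (by rwa [ZMod.val_eq_zero] at h)
        have := Nat.le_of_dvd (by omega) hdvd
        omega
      have hcop : ((x : ZMod p).val).Coprime M := by
        exact Nat.Coprime.pow_right _ (Nat.coprime_comm.mp (hp.coprime_iff_not_dvd.mpr hvn))
      have heu := Nat.ModEq.pow_totient hcop
      have htot : Nat.totient M = p^(t+1) * (p-1) := by
        rw [hM, Nat.totient_prime_pow hp (by omega)]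
        have h9 : t+2-1 = t+1 := rfl
        rw [h9, mul_comm]
      have heuz : (((x:ZMod p).val : ZMod M))^(p^(t+1) * (p-1)) = 1 := by
        have := (ZMod.natCast_eq_natCast_iff _ _ _).mpr heu
        rw [htot] at this
        push_cast at this
        exact this
      calc (((x:ZMod p).val : ZMod M))^(p^(t+1) * ((p-1)*k))
          = ((((x:ZMod p).val : ZMod M))^(p^(t+1) * (p-1)))^k := by
            rw [← pow_mul]; ring_nf
        _ = 1 := by rw [heuz, one_pow]
    rw [Finset.sum_congr rfl (fun x _ => hterm x), Finset.sum_const]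
    rw [Finset.card_univ, ZMod.card_units_eq_totient, Nat.totient_prime hp]
    simp only [nsmul_eq_mul, mul_one]
    push_cast [Nat.cast_sub hp.one_le]
    ring
  · rw [if_neg hd]
    obtain ⟨g, hg⟩ := IsCyclic.exists_generator (α := (ZMod p)ˣ)
    set F : (ZMod p)ˣ → ZMod M := fun x => (((x:ZMod p).val : ZMod M))^(p^(t+1) * m) with hF
    set S := ∑ x : (ZMod p)ˣ, F x with hS
    have key : ∀ x, F (g * x) = F g * F x := by
      intro x
      have hval : ((g*x : (ZMod p)ˣ) : ZMod p).val ≡ (g:ZMod p).val * (x:ZMod p).val [MOD p] := by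
        rw [Units.val_mul, ZMod.val_mul]
        exact Nat.mod_modEq _ p
      have h1 : ((((g*x : (ZMod p)ˣ) : ZMod p).val : ZMod M))^(p^(t+1)) =
          (((g:ZMod p).val * (x:ZMod p).val : ℕ) : ZMod M)^(p^(t+1)) := pe8_teich p t _ _ hval
      simp only [hF]
      rw [pow_mul, h1, ← pow_mul]
      push_cast
      rw [mul_pow]
    have hperm : S = F g * S := by
      rw [hS, Finset.mul_sum]
      calc ∑ x : (ZMod p)ˣ, F x = ∑ x : (ZMod p)ˣ, F (g * x) :=
            (Fintype.sum_equiv (Equiv.mulLeft g) _ _ (fun x => rfl)).symm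
        _ = ∑ x : (ZMod p)ˣ, F g * F x := Finset.sum_congr rfl (fun x _ => key x)
    have hunit : IsUnit (F g - 1) := by
      set π := ZMod.castHom (dvd_pow_self p (Nat.succ_ne_zero (t+1))) (ZMod p)
      have hπ : π (F g - 1) = ((g : ZMod p))^m - 1 := by
        simp only [hF, map_sub, map_pow, map_one, map_natCast]
        rw [ZMod.natCast_val, ZMod.cast_id, pow_mul, ZMod.pow_card_pow]
      have hne : ((g : ZMod p))^m - 1 ≠ 0 := by
        rw [sub_ne_zero]
        intro heq
        have : g^m = 1 := Units.ext (by rwa [Units.val_pow_eq_pow_val, Units.val_one])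
        have horder : orderOf g = p - 1 := by
          have h8 : orderOf g = Fintype.card (ZMod p)ˣ := by
            rw [orderOf_eq_card_of_forall_mem_zpowers hg, Nat.card_eq_fintype_card]
          rw [h8, ZMod.card_units_eq_totient, Nat.totient_prime hp]
        exact hd (horder ▸ orderOf_dvd_of_pow_eq_one this)
      have hx := hπ ▸ hne
      set x := F g - 1
      have hxval : ((x.val : ℕ) : ZMod M) = x := by rw [ZMod.natCast_val, ZMod.cast_id]
      have hπx : ((x.val : ℕ) : ZMod p) ≠ 0 := by
        have h7 : π ((x.val : ℕ) : ZMod M) = ((x.val : ℕ) : ZMod p) := map_natCast π x.val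
        rw [hxval] at h7
        rw [← h7]
        exact hx
      have hpx : ¬ p ∣ x.val := fun h => hπx ((ZMod.natCast_eq_zero_iff _ _).mpr h)
      have : IsUnit ((x.val : ℕ) : ZMod M) := by
        rw [ZMod.isUnit_iff_coprime]
        exact Nat.Coprime.pow_right _ (Nat.coprime_comm.mp (hp.coprime_iff_not_dvd.mpr hpx))
      rwa [hxval] at this
    have : (F g - 1) * S = 0 := by rw [sub_mul, one_mul, ← hperm, sub_self]
    exact ((IsUnit.mul_right_eq_zero hunit).mp this)

lemma pe8_binomderiv {R : Type*} [CommRing R] (x : R) (r : ℕ) (hr : 1 ≤ r) :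
    ∑ j ∈ Finset.range (r+1), (j:R) * (r.choose j) * x^j = r * x * (1+x)^(r-1) := by
  rw [Finset.sum_range_succ']
  simp only [Nat.cast_zero, zero_mul, pow_zero, mul_one, add_zero]
  have hterm : ∀ i, ((i+1 : ℕ):R) * (r.choose (i+1)) * x^(i+1)
      = (r:R) * x * (((r-1).choose i : R) * x^i) := by
    intro i
    have hnat : r * ((r-1).choose i) = r.choose (i+1) * (i+1) := by
      have := Nat.add_one_mul_choose_eq (r-1) i
      rwa [show r-1+1 = r by omega] at this
    have hz : (r:R) * (((r-1).choose i : R)) = (r.choose (i+1) : R) * ((i+1:ℕ):R) := by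
      exact_mod_cast congrArg (Nat.cast : ℕ → R) hnat
    rw [pow_succ]
    push_cast at hz ⊢
    linear_combination (-(x * x^i)) * hz
  rw [Finset.sum_congr rfl (fun i _ => hterm i), ← Finset.mul_sum]
  congr 1
  rw [add_comm (1:R) x, add_pow]
  rw [show r - 1 + 1 = r by omega]
  exact Finset.sum_congr rfl (fun k _ => by ring)

lemma pe8_fermatIter (p : ℕ) [Fact p.Prime] (c : ℤ) (k : ℕ) : (p:ℤ) ∣ c^(p^k) - c := by
  have : ((c^(p^k) - c : ℤ) : ZMod p) = 0 := by
    push_cast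
    rw [ZMod.pow_card_pow, sub_self]
  exact_mod_cast (ZMod.intCast_zmod_eq_zero_iff_dvd _ _).mp this

lemma pe8_fermat_int (p : ℕ) [Fact p.Prime] (z : ℤ) (h : ¬ (p:ℤ) ∣ z) : (p:ℤ) ∣ z^(p-1) - 1 := by
  have hz : (z : ZMod p) ≠ 0 := by
    rw [Ne, ZMod.intCast_zmod_eq_zero_iff_dvd]; exact h
  have : ((z^(p-1) - 1 : ℤ) : ZMod p) = 0 := by
    push_cast
    rw [ZMod.pow_card_sub_one_eq_one hz, sub_self]
  exact_mod_cast (ZMod.intCast_zmod_eq_zero_iff_dvd _ _).mp this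

lemma pe8_freshman (p : ℕ) [Fact p.Prime] (c : ℤ) : (p:ℤ) ∣ (1+c)^p - 1 - c^p := by
  have : (((1+c)^p - 1 - c^p : ℤ) : ZMod p) = 0 := by
    push_cast
    rw [add_pow_char, ZMod.pow_card, ZMod.pow_card]
    ring
  exact_mod_cast (ZMod.intCast_zmod_eq_zero_iff_dvd _ _).mp this

lemma pe8_pow_weird (p : ℕ) [Fact p.Prime] (z : ℤ) (h : ¬ (p:ℤ) ∣ z) :
    (p:ℤ) ∣ z^(p*(p-2)+1) - 1 := by
  have hz : (z : ZMod p) ≠ 0 := by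
    rw [Ne, ZMod.intCast_zmod_eq_zero_iff_dvd]; exact h
  have hp := (Fact.out : p.Prime)
  have : ((z^(p*(p-2)+1) - 1 : ℤ) : ZMod p) = 0 := by
    push_cast
    have h1 : (z : ZMod p)^(p*(p-2)+1) = ((z:ZMod p)^p)^(p-2) * (z:ZMod p) := by
      rw [← pow_mul, ← pow_succ]
    rw [h1, ZMod.pow_card, ← pow_succ, show p-2+1 = p-1 by have := hp.two_le; omega,
      ZMod.pow_card_sub_one_eq_one hz, sub_self]
  exact_mod_cast (ZMod.intCast_zmod_eq_zero_iff_dvd _ _).mp this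
lemma pe8_percKey (p t : ℕ) [Fact p.Prime] (hp3 : 3 < p) (c : ℕ) (hc1 : 1 ≤ c) (hc2 : c ≤ p-2) :
    (p:ℤ) ∣ ((c:ℤ)^(p^(t+1)))^(p-2) * (1+(c:ℤ)^(p^(t+1))) * (((1+(c:ℤ)^(p^(t+1)))^(p-1) - 1)/p)
      - (c:ℤ)^(p-2) * (((1+(c:ℤ))^p - 1 - (c:ℤ)^p)/p) := by
  have hp := (Fact.out : p.Prime)
  set C : ℤ := (c:ℤ) with hC
  set ζ : ℤ := C^(p^(t+1)) with hζ
  set u : ℤ := 1 + ζ with hu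
  set w : ℤ := (1+C)^p with hw
  -- basic non-divisibilities
  have hpC : ¬ (p:ℤ) ∣ C := by
    rw [hC, Int.natCast_dvd_natCast]
    intro h
    have := Nat.le_of_dvd (by omega) h
    omega
  have hpC1 : ¬ (p:ℤ) ∣ (1+C) := by
    have : (1+C) = ((1+c : ℕ) : ℤ) := by push_cast; ring
    rw [this, Int.natCast_dvd_natCast]
    intro h
    have := Nat.le_of_dvd (by omega) h
    omega
  have hζC : (p:ℤ) ∣ ζ - C := pe8_fermatIter p C (t+1)
  have hpu : ¬ (p:ℤ) ∣ u := by
    intro h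
    exact hpC1 (by
      have : (1+C) = u - (ζ - C) := by rw [hu]; ring
      rw [this]
      exact dvd_sub h hζC)
  -- exact divisions
  obtain ⟨a, ha⟩ := pe8_fermat_int p u hpu
  obtain ⟨K, hK⟩ := pe8_freshman p C
  obtain ⟨α, hα⟩ := pe8_fermat_int p (1+C) hpC1
  have hdiva : (u^(p-1) - 1)/(p:ℤ) = a := by rw [ha]; exact Int.mul_ediv_cancel_left a (by exact_mod_cast hp.ne_zero)
  have hdivK : ((1+C)^p - 1 - C^p)/(p:ℤ) = K := by rw [hK]; exact Int.mul_ediv_cancel_left K (by exact_mod_cast hp.ne_zero)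
  rw [hdiva, hdivK]
  -- ζ ≡ C^p mod p²
  have hIi : (p:ℤ)^2 ∣ ζ - C^p := by
    have h0 : (p:ℤ) ∣ C^(p^t) - C := pe8_fermatIter p C t
    have h1 := dvd_sub_pow_of_dvd_sub h0 1
    have h2 : (C^(p^t))^(p^1) = ζ := by
      rw [hζ, ← pow_mul, pow_one, ← pow_succ]
    rwa [h2, pow_one] at h1
  -- u ≡ w - pK mod p²
  have hu_w : (p:ℤ)^2 ∣ u - (w - (p:ℤ)*K) := by
    have : u - (w - (p:ℤ)*K) = ζ - C^p := by rw [hu, hw, ← hK]; ring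
    rwa [this]
  -- u^(p-1) ≡ (w - pK)^(p-1) mod p²
  have hIII : (p:ℤ)^2 ∣ u^(p-1) - (w - (p:ℤ)*K)^(p-1) := by
    have := Int.ModEq.pow (p-1) (Int.modEq_iff_dvd.mpr (by
      have : (w - (p:ℤ)*K) - u = -(u - (w - (p:ℤ)*K)) := by ring
      rw [this]
      exact (hu_w).neg_right : ((p:ℤ)^2 ∣ (w - (p:ℤ)*K) - u)))
    exact (Int.modEq_iff_dvd.mp this.symm)
  -- (w-pK)^(p-1) ≡ w^(p-1) + pK w^(p-2) mod p²
  have hIV : (p:ℤ)^2 ∣ (w - (p:ℤ)*K)^(p-1) - w^(p-1) - (p:ℤ)*K*w^(p-2) := by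
    obtain ⟨A, hA⟩ := pe8_aux1 w (-((p:ℤ)*K)) (p-1)
    have e1 : p-1-1 = p-2 := by omega
    rw [e1] at hA
    have e2 : ((p-1 : ℕ):ℤ) = (p:ℤ) - 1 := by push_cast [Nat.cast_sub hp.one_le]; ring
    rw [e2] at hA
    refine ⟨K^2*A - K*w^(p-2), ?_⟩
    linear_combination hA
  -- w^(p-1) ≡ 1 mod p²
  have hV : (p:ℤ)^2 ∣ w^(p-1) - 1 := by
    obtain ⟨A2, hA2⟩ := pe8_aux1 1 ((p:ℤ)*α) p
    have hwp : w^(p-1) = (1+(p:ℤ)*α)^p := by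
      have h1 : (1:ℤ)+(p:ℤ)*α = (1+C)^(p-1) := by linarith [hα]
      rw [hw, h1, ← pow_mul, ← pow_mul, Nat.mul_comm]
    refine ⟨α + α^2*A2, ?_⟩
    rw [hwp]
    simp only [one_pow, mul_one] at hA2
    linear_combination hA2
  -- a ≡ K w^(p-2) mod p
  have ha2 : (p:ℤ) ∣ a - K*w^(p-2) := by
    obtain ⟨d3, hd3⟩ := hIII
    obtain ⟨d4, hd4⟩ := hIV
    obtain ⟨d5, hd5⟩ := hV
    have hVI : (p:ℤ)*(a - K*w^(p-2)) = (p:ℤ)*((p:ℤ)*(d3+d4+d5)) := by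
      have : (p:ℤ)*a - (p:ℤ)*(K*w^(p-2)) = (p:ℤ)^2*(d3+d4+d5) := by
        linear_combination hd3 + hd4 + hd5 - ha
      linear_combination this
    have hp0 : (p:ℤ) ≠ 0 := by exact_mod_cast hp.ne_zero
    exact ⟨d3+d4+d5, mul_left_cancel₀ hp0 hVI⟩
  -- final congruence chain mod p
  have m1 : ζ ≡ C [ZMOD (p:ℤ)] := Int.modEq_iff_dvd.mpr (by
    have : C - ζ = -(ζ - C) := by ring
    rw [this]; exact dvd_neg.mpr hζC)
  have m2 : u ≡ 1+C [ZMOD (p:ℤ)] := Int.modEq_iff_dvd.mpr (by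
    have : (1+C) - u = -(ζ - C) := by rw [hu]; ring
    rw [this]; exact dvd_neg.mpr hζC)
  have m3 : a ≡ K*w^(p-2) [ZMOD (p:ℤ)] := Int.modEq_iff_dvd.mpr (by
    have : K*w^(p-2) - a = -(a - K*w^(p-2)) := by ring
    rw [this]; exact dvd_neg.mpr ha2)
  have m4 : (1+C)^(p*(p-2)+1) ≡ 1 [ZMOD (p:ℤ)] := Int.modEq_iff_dvd.mpr (by
    have : (1:ℤ) - (1+C)^(p*(p-2)+1) = -((1+C)^(p*(p-2)+1) - 1) := by ring
    rw [this]; exact dvd_neg.mpr (pe8_pow_weird p (1+C) hpC1))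
  have mbig : ζ^(p-2)*u*a ≡ C^(p-2)*K [ZMOD (p:ℤ)] := by
    calc ζ^(p-2)*u*a ≡ C^(p-2)*(1+C)*(K*w^(p-2)) [ZMOD (p:ℤ)] :=
          ((m1.pow _).mul m2).mul m3
      _ = C^(p-2)*K*((1+C)^(p*(p-2))*(1+C)) := by rw [hw, ← pow_mul]; ring
      _ = C^(p-2)*K*((1+C)^(p*(p-2)+1)) := by rw [← pow_succ]
      _ ≡ C^(p-2)*K*1 [ZMOD (p:ℤ)] := (Int.ModEq.refl _).mul m4
      _ = C^(p-2)*K := mul_one _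
  have := mbig.symm.dvd
  have hfin : ζ^(p-2)*u*a - C^(p-2)*K = -(C^(p-2)*K - ζ^(p-2)*u*a) := by ring
  rw [hfin]
  exact dvd_neg.mpr (mbig.dvd)

section
variable (p : ℕ) [Fact p.Prime]

-- transfer of power sums to ℤ
lemma pe8_Pdvd1 (m : ℕ) (h : (p-1) ∣ m) : (p:ℤ) ∣ (∑ c ∈ Finset.Icc 1 (p-1), (c:ℤ)^m) + 1 := by
  rw [← ZMod.intCast_zmod_eq_zero_iff_dvd]
  push_cast
  rw [pe8_sum_pow_Icc p m, if_pos h]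
  ring

lemma pe8_Pdvd2 (m : ℕ) (h : ¬ (p-1) ∣ m) : (p:ℤ) ∣ (∑ c ∈ Finset.Icc 1 (p-1), (c:ℤ)^m) := by
  rw [← ZMod.intCast_zmod_eq_zero_iff_dvd]
  push_cast
  rw [pe8_sum_pow_Icc p m, if_neg h]

-- binomial expansion of the pe8_freshman numerator
lemma pe8_expand1 (hp3 : 3 < p) (C : ℤ) :
    (1+C)^p - 1 - C^p = ∑ k ∈ Finset.range (p-1), ((p.choose (k+1)):ℤ) * C^(k+1) := by
  have hp := (Fact.out : p.Prime)
  have h1 : (1+C)^p = ∑ k ∈ Finset.range (p+1), C^k * ((p.choose k):ℤ) := by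
    rw [add_comm]
    rw [add_pow]
    exact Finset.sum_congr rfl (fun k _ => by rw [one_pow]; ring)
  rw [h1, Finset.sum_range_succ, Nat.choose_self]
  have h2 : p = (p-1)+1 := by omega
  rw [h2, Finset.sum_range_succ']
  simp only [Nat.choose_zero_right, pow_zero, Nat.cast_one]
  rw [← h2]
  push_cast
  have h3 : ∀ k, C^(k+1) * ((p.choose (k+1)):ℤ) = ((p.choose (k+1)):ℤ) * C^(k+1) :=
    fun k => mul_comm _ _
  rw [Finset.sum_congr rfl (fun k _ => h3 k)]
  ring

-- main mod-p computation: ∑ c^(p-2) K_c ≡ -1 mod p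
lemma pe8_mainB (hp3 : 3 < p) :
    (p:ℤ) ∣ (∑ c ∈ Finset.Icc 1 (p-1), (c:ℤ)^(p-2) * (((1+(c:ℤ))^p - 1 - (c:ℤ)^p)/p)) + 1 := by
  have hp := (Fact.out : p.Prime)
  have hp0 : (p:ℤ) ≠ 0 := by exact_mod_cast hp.ne_zero
  -- multiply by p
  have key : (p:ℤ)^2 ∣ (p:ℤ) * ((∑ c ∈ Finset.Icc 1 (p-1), (c:ℤ)^(p-2) * (((1+(c:ℤ))^p - 1 - (c:ℤ)^p)/p)) + 1) := by
    have hKdef : ∀ c : ℕ, (p:ℤ) * (((1+(c:ℤ))^p - 1 - (c:ℤ)^p)/p) = (1+(c:ℤ))^p - 1 - (c:ℤ)^p :=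
      fun c => Int.mul_ediv_cancel' (pe8_freshman p (c:ℤ))
    have h1 : (p:ℤ) * ((∑ c ∈ Finset.Icc 1 (p-1), (c:ℤ)^(p-2) * (((1+(c:ℤ))^p - 1 - (c:ℤ)^p)/p)) + 1)
        = (∑ c ∈ Finset.Icc 1 (p-1), (c:ℤ)^(p-2) * ((1+(c:ℤ))^p - 1 - (c:ℤ)^p)) + p := by
      rw [mul_add, Finset.mul_sum, mul_one]
      congr 1
      refine Finset.sum_congr rfl (fun c _ => ?_)
      rw [← mul_assoc, mul_comm (p:ℤ) ((c:ℤ)^(p-2)), mul_assoc, hKdef c]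
    rw [h1]
    -- expand and swap
    have h2 : ∀ c : ℕ, (c:ℤ)^(p-2) * ((1+(c:ℤ))^p - 1 - (c:ℤ)^p)
        = ∑ k ∈ Finset.range (p-1), ((p.choose (k+1)):ℤ) * (c:ℤ)^(p-1+k) := by
      intro c
      rw [pe8_expand1 p hp3, Finset.mul_sum]
      refine Finset.sum_congr rfl (fun k _ => ?_)
      rw [show p-1+k = (p-2)+(k+1) by omega, pow_add]
      ring
    rw [Finset.sum_congr rfl (fun c _ => h2 c), Finset.sum_comm]
    -- now sum over k of choose * P(p-1+k)
    have h3 : ∀ k, (∑ c ∈ Finset.Icc 1 (p-1), ((p.choose (k+1)):ℤ) * (c:ℤ)^(p-1+k))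
        = ((p.choose (k+1)):ℤ) * ∑ c ∈ Finset.Icc 1 (p-1), (c:ℤ)^(p-1+k) := by
      intro k; rw [Finset.mul_sum]
    rw [Finset.sum_congr rfl (fun k _ => h3 k)]
    -- split off k = 0
    rw [show p-1 = (p-2)+1 by omega, Finset.sum_range_succ']
    rw [show (0:ℕ)+1 = 1 from rfl, Nat.choose_one_right]
    rw [show (p-2)+1 = p-1 by omega]
    have hk0 : ((p:ℤ)) * (∑ c ∈ Finset.Icc 1 (p-1), (c:ℤ)^(p-1+0)) + (p:ℤ)
        = (p:ℤ) * ((∑ c ∈ Finset.Icc 1 (p-1), (c:ℤ)^(p-1)) + 1) := by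
      rw [mul_add, mul_one]
      norm_num
    have hdvd0 : (p:ℤ)^2 ∣ ((p:ℤ)) * (∑ c ∈ Finset.Icc 1 (p-1), (c:ℤ)^(p-1+0)) + (p:ℤ) := by
      rw [hk0, pow_two]
      exact mul_dvd_mul_left _ (pe8_Pdvd1 p (p-1) dvd_rfl)
    have hdvdk : ∀ k ∈ Finset.range (p-2), (p:ℤ)^2 ∣
        ((p.choose (k+1+1)):ℤ) * ∑ c ∈ Finset.Icc 1 (p-1), (c:ℤ)^(p-1+(k+1)) := by
      intro k hk
      rw [Finset.mem_range] at hk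
      have hch : (p:ℤ) ∣ ((p.choose (k+2)):ℤ) := by
        exact_mod_cast Int.natCast_dvd_natCast.mpr (hp.dvd_choose_self (by omega) (by omega))
      have hP : (p:ℤ) ∣ ∑ c ∈ Finset.Icc 1 (p-1), (c:ℤ)^(p-1+(k+1)) := by
        refine pe8_Pdvd2 p _ (fun hdd => ?_)
        have h5 : (p-1) ∣ (k+1) := (Nat.dvd_add_right dvd_rfl).mp (by
          rwa [show p-1+(k+1) = (p-1)+(k+1) from rfl] at hdd)
        have := Nat.le_of_dvd (by omega) h5
        omega
      rw [pow_two]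
      exact mul_dvd_mul hch hP
    rw [add_assoc]
    exact dvd_add (Finset.dvd_sum hdvdk) (by simpa using hdvd0)

  -- cancel one factor of p
  obtain ⟨d, hd⟩ := key
  refine ⟨d, mul_left_cancel₀ hp0 ?_⟩
  rw [hd, pow_two, mul_assoc]
end

lemma pe8_edgeK (p : ℕ) [Fact p.Prime] (hp3 : 3 < p) :
    (p:ℤ) ∣ (((1+((p-1:ℕ):ℤ))^p - 1 - ((p-1:ℕ):ℤ)^p)/p) := by
  have hp := (Fact.out : p.Prime)
  have hp0 : (p:ℤ) ≠ 0 := by exact_mod_cast hp.ne_zero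
  set D : ℤ := ((p-1:ℕ):ℤ) with hDdef
  have hD : D = (p:ℤ) - 1 := by rw [hDdef]; push_cast [Nat.cast_sub hp.one_le]; ring
  have hKK := Int.mul_ediv_cancel' (pe8_freshman p D)
  have hodd : Odd p := hp.odd_of_ne_two (by omega)
  have heven : Even (p-1) := by
    obtain ⟨k, hk⟩ := hodd
    exact ⟨k, by omega⟩
  obtain ⟨A, hA⟩ := pe8_aux1 (-1 : ℤ) (p:ℤ) p
  rw [Even.neg_one_pow heven, Odd.neg_one_pow hodd] at hA
  have hsq : (p:ℤ)^2 ∣ (1+D)^p - 1 - D^p := by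
    have h1 : (1+D)^p = (p:ℤ)^p := by rw [hD]; ring_nf
    have h2 : D^p = (-1 + (p:ℤ))^p := by rw [hD]; ring_nf
    refine ⟨(p:ℤ)^(p-2) - 1 - A, ?_⟩
    rw [h1, h2]
    have h3 : (p:ℤ)^p = (p:ℤ)^2 * (p:ℤ)^(p-2) := by
      rw [← pow_add]
      congr 1
      omega
    have h4 : (-1 + (p:ℤ))^p = -1 + (p:ℤ)*1*(p:ℤ) + (p:ℤ)^2*A := by linarith [hA]
    rw [h3, h4]
    ring
  obtain ⟨d, hd⟩ := hsq
  refine ⟨d, mul_left_cancel₀ hp0 ?_⟩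
  rw [hKK, hd, pow_two, mul_assoc]

lemma pe8_stepB (p t : ℕ) [Fact p.Prime] (hp3 : 3 < p) :
    (p:ℤ) ∣ (∑ c ∈ Finset.Icc 1 (p-2),
      ((c:ℤ)^(p^(t+1)))^(p-2) * (1+(c:ℤ)^(p^(t+1))) * (((1+(c:ℤ)^(p^(t+1)))^(p-1) - 1)/p)) + 1 := by
  have hp := (Fact.out : p.Prime)
  set f : ℕ → ℤ := fun c =>
    ((c:ℤ)^(p^(t+1)))^(p-2) * (1+(c:ℤ)^(p^(t+1))) * (((1+(c:ℤ)^(p^(t+1)))^(p-1) - 1)/p) with hf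
  set g : ℕ → ℤ := fun c => (c:ℤ)^(p-2) * (((1+(c:ℤ))^p - 1 - (c:ℤ)^p)/p) with hg
  have h1 : (p:ℤ) ∣ ∑ c ∈ Finset.Icc 1 (p-2), (f c - g c) := by
    refine Finset.dvd_sum (fun c hc => ?_)
    rw [Finset.mem_Icc] at hc
    exact pe8_percKey p t hp3 c hc.1 hc.2
  have h2 := pe8_mainB p hp3
  have h3 : ∑ c ∈ Finset.Icc 1 (p-1), g c = (∑ c ∈ Finset.Icc 1 (p-2), g c) + g (p-1) := by
    rw [show p-1 = (p-2)+1 by omega]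
    exact Finset.sum_Icc_succ_top (by omega) g
  have h4 : (p:ℤ) ∣ g (p-1) := Dvd.dvd.mul_left (pe8_edgeK p hp3) _
  have hiden : (∑ c ∈ Finset.Icc 1 (p-2), f c) + 1
      = (∑ c ∈ Finset.Icc 1 (p-2), (f c - g c)) + ((∑ c ∈ Finset.Icc 1 (p-1), g c) + 1) - g (p-1) := by
    rw [h3, Finset.sum_sub_distrib]
    ring
  rw [hiden]
  exact dvd_sub (dvd_add h1 h2) h4

lemma pe8_edgeU (p t : ℕ) [Fact p.Prime] (hp3 : 3 < p) :
    ((p:ℤ)^(t+2)) ∣ 1 + ((p-1:ℕ):ℤ)^(p^(t+1)) := by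
  have hp := (Fact.out : p.Prime)
  have hD : ((p-1:ℕ):ℤ) = (p:ℤ) - 1 := by push_cast [Nat.cast_sub hp.one_le]; ring
  have h0 : (p:ℤ) ∣ ((p-1:ℕ):ℤ) - (-1) := by rw [hD]; exact ⟨1, by ring⟩
  have h1 := dvd_sub_pow_of_dvd_sub h0 (t+1)
  have hodd : Odd (p^(t+1)) := (hp.odd_of_ne_two (by omega)).pow
  rw [Odd.neg_one_pow hodd] at h1
  have h2 : ((p-1:ℕ):ℤ)^(p^(t+1)) - (-1) = 1 + ((p-1:ℕ):ℤ)^(p^(t+1)) := by ring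
  rwa [h2] at h1

lemma pe8_stepU (p t n R : ℕ) [Fact p.Prime] (hp3 : 3 < p) (c : ℕ) (hc1 : 1 ≤ c) (hc2 : c ≤ p-2)
    (hR : R = 1 + n*(p-1)*p^t) :
    ((p:ℤ)^(t+2)) ∣ (1+(c:ℤ)^(p^(t+1)))^R
      - (1+(c:ℤ)^(p^(t+1))) * (1 + (n:ℤ)*(p:ℤ)^(t+1) * (((1+(c:ℤ)^(p^(t+1)))^(p-1) - 1)/p)) := by
  have hp := (Fact.out : p.Prime)
  set u : ℤ := 1+(c:ℤ)^(p^(t+1)) with hu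
  have hpC1 : ¬ (p:ℤ) ∣ (1+(c:ℤ)) := by
    have h9 : (1+(c:ℤ)) = ((1+c : ℕ) : ℤ) := by push_cast; ring
    rw [h9, Int.natCast_dvd_natCast]
    intro h
    have := Nat.le_of_dvd (by omega) h
    omega
  have hpu : ¬ (p:ℤ) ∣ u := by
    intro h
    refine hpC1 ?_
    have h9 : (1+(c:ℤ)) = u - ((c:ℤ)^(p^(t+1)) - (c:ℤ)) := by rw [hu]; ring
    rw [h9]
    exact dvd_sub h (pe8_fermatIter p (c:ℤ) (t+1))
  obtain ⟨a, ha⟩ := pe8_fermat_int p u hpu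
  have hdiva : (u^(p-1) - 1)/(p:ℤ) = a := by
    rw [ha]; exact Int.mul_ediv_cancel_left a (by exact_mod_cast hp.ne_zero)
  rw [hdiva]
  -- u^R = u * ((u^(p-1))^(p^t))^n
  have hexp : u^R = u * ((u^(p-1))^(p^t))^n := by
    rw [hR, pow_add, pow_one, ← pow_mul, ← pow_mul]
    congr 2
    ring
  rw [hexp]
  -- (u^(p-1))^(p^t) ≡ 1 + p^(t+1) a
  have h1 : ((p:ℤ)^(t+2)) ∣ (u^(p-1))^(p^t) - (1 + (p:ℤ)^(t+1)*a) := by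
    have h9 : u^(p-1) = 1 + (p:ℤ)*a := by linarith [ha]
    rw [h9]
    exact pe8_aux3 p hp hp3 a t
  have h2 : ((p:ℤ)^(t+2)) ∣ ((u^(p-1))^(p^t))^n - (1 + (p:ℤ)^(t+1)*a)^n :=
    h1.trans (sub_dvd_pow_sub_pow _ _ n)
  have h3 : ((p:ℤ)^(t+2)) ∣ (1 + (p:ℤ)^(t+1)*a)^n - (1 + (n:ℤ)*(p:ℤ)^(t+1)*a) := by
    obtain ⟨A, hA⟩ := pe8_aux1 1 ((p:ℤ)^(t+1)*a) n
    simp only [one_pow, mul_one] at hA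
    refine ⟨(p:ℤ)^t * a^2 * A, ?_⟩
    have h9 : ((p:ℤ)^(t+1)*a)^2 * A = (p:ℤ)^(t+2) * ((p:ℤ)^t * a^2 * A) := by
      rw [mul_pow, ← pow_mul]
      rw [show (t+1)*2 = (t+2)+t by omega, pow_add]
      ring
    linear_combination hA + h9
  have h4 : u * ((u^(p-1))^(p^t))^n - u * (1 + (n:ℤ)*(p:ℤ)^(t+1)*a)
      = u * ((((u^(p-1))^(p^t))^n - (1 + (p:ℤ)^(t+1)*a)^n) + ((1 + (p:ℤ)^(t+1)*a)^n - (1 + (n:ℤ)*(p:ℤ)^(t+1)*a))) := by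
    ring
  rw [show u * ((u^(p-1))^(p^t))^n - u * (1 + (n:ℤ)*(p:ℤ)^(t+1) * a)
      = u * ((u^(p-1))^(p^t))^n - u * (1 + (n:ℤ)*(p:ℤ)^(t+1)*a) by ring]
  rw [h4]
  exact Dvd.dvd.mul_left (dvd_add h2 h3) u

theorem stmt_8 (p n t r : ℕ) (hp : p.Prime) (hp3 : 3 < p)
    (hr : r = 2 + n * (p - 1) * p^t) :
    (p : ℤ)^(t + 2) ∣ (1 - (p : ℤ)) * (∑ j ∈ (Finset.Ioo 0 r).filter
        (fun j => j % (p - 1) = 2 % (p - 1)), (j : ℤ) * (r.choose j : ℤ))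
      - (p : ℤ) * (r : ℤ) * (2 - (r : ℤ)) := by
  classical
  haveI : Fact p.Prime := ⟨hp⟩
  have hp5 : 5 ≤ p := by
    rcases Nat.lt_or_ge p 5 with h | h
    · have h4 : p = 4 := by omega
      rw [h4] at hp; norm_num at hp
    · exact h
  have hr2 : 2 ≤ r := by omega
  haveI : NeZero (p^(t+2)) := ⟨pow_ne_zero _ hp.ne_zero⟩
  -- move to ZMod (p^(t+2))
  rw [show (p:ℤ)^(t+2) = ((p^(t+2) : ℕ):ℤ) by push_cast; ring]
  rw [← ZMod.intCast_zmod_eq_zero_iff_dvd]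
  push_cast
  set N := p^(t+2) with hN
  set SZ : ZMod N := ∑ j ∈ (Finset.Ioo 0 r).filter (fun j => j % (p-1) = 2 % (p-1)),
    (j : ZMod N) * (r.choose j : ZMod N) with hSZ

  have hNZ : ((N:ℕ):ℤ) = (p:ℤ)^(t+2) := by rw [hN]; push_cast; ring
  have hzero : (p : ZMod N)^(t+2) = 0 := by
    rw [← Nat.cast_pow, ← hN, ZMod.natCast_self]
  have hrcast : (r : ZMod N) = 2 + (n:ZMod N)*((p:ZMod N)-1)*(p:ZMod N)^t := by
    rw [hr]; push_cast [Nat.cast_sub hp.one_le]; ring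
  have h2mod : 2 % (p-1) = 2 := Nat.mod_eq_of_lt (by omega)
  have hfilt : ∀ j : ℕ, (j % (p-1) = 2 % (p-1)) ↔ (p-1) ∣ (j + (p-3)) := by
    intro j
    constructor
    · intro hj
      have h1 : j ≡ 2 [MOD p-1] := hj
      have h2 : j + (p-3) ≡ 2 + (p-3) [MOD p-1] := h1.add_right _
      rw [show 2 + (p-3) = p-1 by omega] at h2
      have h3 : j + (p-3) ≡ 0 [MOD p-1] := h2.trans (Nat.modEq_zero_iff_dvd.mpr dvd_rfl)
      exact Nat.modEq_zero_iff_dvd.mp h3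
    · intro hd
      have h3 : j + (p-3) ≡ 0 [MOD p-1] := Nat.modEq_zero_iff_dvd.mpr hd
      have h4 : (0:ℕ) ≡ 2 + (p-3) [MOD p-1] := by
        rw [show 2 + (p-3) = p-1 by omega]
        exact (Nat.modEq_zero_iff_dvd.mpr dvd_rfl).symm
      have h5 : j + (p-3) ≡ 2 + (p-3) [MOD p-1] := h3.trans h4
      exact Nat.ModEq.add_right_cancel' _ h5
  have hPr : r % (p-1) = 2 % (p-1) := by
    rw [hr, show 2 + n*(p-1)*p^t = 2 + (p-1)*(n*p^t) by ring, Nat.add_mul_mod_self_left]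
  have hsetEq : (Finset.range (r+1)).filter (fun j => j % (p-1) = 2 % (p-1))
      = insert r ((Finset.Ioo 0 r).filter (fun j => j % (p-1) = 2 % (p-1))) := by
    ext j
    simp only [Finset.mem_filter, Finset.mem_range, Finset.mem_insert, Finset.mem_Ioo]
    constructor
    · rintro ⟨hjr, hjm⟩
      rcases eq_or_ne j r with h | h
      · exact Or.inl h
      · right
        refine ⟨⟨?_, by omega⟩, hjm⟩
        rcases Nat.eq_zero_or_pos j with h0 | h0
        · rw [h0, Nat.zero_mod, h2mod] at hjm; omega
        · exact h0
    · rintro (h | ⟨⟨h1, h2⟩, h3⟩)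
      · exact ⟨by omega, h ▸ hPr⟩
      · exact ⟨by omega, h3⟩
  have hS2 : ∑ j ∈ (Finset.range (r+1)).filter (fun j => j % (p-1) = 2 % (p-1)),
      ((j : ZMod N) * (r.choose j : ZMod N)) = SZ + (r : ZMod N) := by
    rw [hsetEq, Finset.sum_insert (by simp [Finset.mem_filter, Finset.mem_Ioo])]
    rw [Nat.choose_self, hSZ]
    push_cast
    ring
  have hA1 : ((p:ZMod N)-1) * (SZ + (r:ZMod N))
      = ∑ j ∈ Finset.range (r+1), ((j : ZMod N) * (r.choose j : ZMod N)) *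
          (if (p-1) ∣ (j + (p-3)) then ((p:ZMod N)-1) else 0) := by
    rw [← hS2, Finset.mul_sum, Finset.sum_filter]
    refine Finset.sum_congr rfl (fun j _ => ?_)
    by_cases hc : j % (p-1) = 2 % (p-1)
    · rw [if_pos hc, if_pos ((hfilt j).mp hc)]; ring
    · rw [if_neg hc, if_neg (fun hd => hc ((hfilt j).mpr hd))]; ring
  have hA2 : ∀ j : ℕ, (if (p-1) ∣ (j + (p-3)) then ((p:ZMod N)-1) else 0)
      = ∑ c ∈ Finset.Icc 1 (p-1), (((c : ZMod N))^(p^(t+1)))^(j+(p-3)) := by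
    intro j
    rw [← pe8_orth p t hp3 (j+(p-3))]
    exact Finset.sum_congr rfl (fun c _ => by rw [← pow_mul])
  have hA3 : ∑ j ∈ Finset.range (r+1), ((j : ZMod N) * (r.choose j : ZMod N)) *
        (if (p-1) ∣ (j + (p-3)) then ((p:ZMod N)-1) else 0)
      = ∑ c ∈ Finset.Icc 1 (p-1), (r:ZMod N) * (((c:ZMod N))^(p^(t+1)))^(p-2)
          * (1+((c:ZMod N))^(p^(t+1)))^(r-1) := by
    have h1 : ∀ j ∈ Finset.range (r+1), ((j : ZMod N) * (r.choose j : ZMod N)) *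
        (if (p-1) ∣ (j + (p-3)) then ((p:ZMod N)-1) else 0)
        = ∑ c ∈ Finset.Icc 1 (p-1), ((j : ZMod N) * (r.choose j : ZMod N)) * (((c:ZMod N))^(p^(t+1)))^(j+(p-3)) :=
      fun j _ => by rw [hA2 j, Finset.mul_sum]
    rw [Finset.sum_congr rfl h1, Finset.sum_comm]
    refine Finset.sum_congr rfl (fun c _ => ?_)
    have h2 : ∀ j : ℕ, ((j : ZMod N) * (r.choose j : ZMod N)) * (((c:ZMod N))^(p^(t+1)))^(j+(p-3))
        = ((j : ZMod N) * (r.choose j : ZMod N) * (((c:ZMod N))^(p^(t+1)))^j) * (((c:ZMod N))^(p^(t+1)))^(p-3) :=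
      fun j => by rw [pow_add]; ring
    rw [Finset.sum_congr rfl (fun j _ => h2 j), ← Finset.sum_mul,
      pe8_binomderiv (((c:ZMod N))^(p^(t+1))) r (by omega)]
    rw [show p-2 = (p-3)+1 by omega, pow_succ]
    ring
  have hUedge : (1 + (((p-1:ℕ) : ZMod N))^(p^(t+1))) = 0 := by
    have h9 : ((1 + ((p-1:ℕ):ℤ)^(p^(t+1)) : ℤ) : ZMod N) = 0 :=
      (ZMod.intCast_zmod_eq_zero_iff_dvd _ N).mpr (by rw [hNZ]; exact pe8_edgeU p t hp3)
    push_cast at h9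
    exact h9
  have hsplit : ∀ (f : ℕ → ZMod N), ∑ c ∈ Finset.Icc 1 (p-1), f c
      = (∑ c ∈ Finset.Icc 1 (p-2), f c) + f (p-1) := by
    intro f
    rw [show p-1 = (p-2)+1 by omega]
    exact Finset.sum_Icc_succ_top (by omega) f
  have hA5 : ∑ c ∈ Finset.Icc 1 (p-1), (r:ZMod N) * (((c:ZMod N))^(p^(t+1)))^(p-2)
          * (1+((c:ZMod N))^(p^(t+1)))^(r-1)
      = ∑ c ∈ Finset.Icc 1 (p-2), (r:ZMod N) * (((c:ZMod N))^(p^(t+1)))^(p-2)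
          * (1+((c:ZMod N))^(p^(t+1)))^(r-1) := by
    rw [hsplit (fun c => (r:ZMod N) * (((c:ZMod N))^(p^(t+1)))^(p-2)
          * (1+((c:ZMod N))^(p^(t+1)))^(r-1))]
    rw [hUedge, zero_pow (show r-1 ≠ 0 by omega), mul_zero, add_zero]
  set aZ : ℕ → ZMod N := fun c => ((((1+(c:ℤ)^(p^(t+1)))^(p-1) - 1)/(p:ℤ) : ℤ) : ZMod N) with haZ
  have hA6 : ∀ c ∈ Finset.Icc 1 (p-2), (1+((c:ZMod N))^(p^(t+1)))^(r-1)
      = (1+((c:ZMod N))^(p^(t+1))) * (1 + (n:ZMod N)*(p:ZMod N)^(t+1) * aZ c) := by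
    intro c hc
    rw [Finset.mem_Icc] at hc
    have hstep := pe8_stepU p t n (r-1) hp3 c hc.1 hc.2 (by omega)
    have h9 : (((1+(c:ℤ)^(p^(t+1)))^(r-1)
      - (1+(c:ℤ)^(p^(t+1))) * (1 + (n:ℤ)*(p:ℤ)^(t+1) * (((1+(c:ℤ)^(p^(t+1)))^(p-1) - 1)/p)) : ℤ) : ZMod N) = 0 :=
      (ZMod.intCast_zmod_eq_zero_iff_dvd _ N).mpr (by rw [hNZ]; exact hstep)
    push_cast at h9
    rw [sub_eq_zero] at h9
    exact h9
  have hA6' : ∑ c ∈ Finset.Icc 1 (p-2), (r:ZMod N) * (((c:ZMod N))^(p^(t+1)))^(p-2)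
          * (1+((c:ZMod N))^(p^(t+1)))^(r-1)
      = ∑ c ∈ Finset.Icc 1 (p-2), (r:ZMod N) * (((c:ZMod N))^(p^(t+1)))^(p-2)
          * ((1+((c:ZMod N))^(p^(t+1))) * (1 + (n:ZMod N)*(p:ZMod N)^(t+1) * aZ c)) :=
    Finset.sum_congr rfl (fun c hc => by rw [hA6 c hc])
  have hA7 : ∑ c ∈ Finset.Icc 1 (p-2), (r:ZMod N) * (((c:ZMod N))^(p^(t+1)))^(p-2)
          * ((1+((c:ZMod N))^(p^(t+1))) * (1 + (n:ZMod N)*(p:ZMod N)^(t+1) * aZ c))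
      = (r:ZMod N) * (∑ c ∈ Finset.Icc 1 (p-2), (((c:ZMod N))^(p^(t+1)))^(p-2) * (1+((c:ZMod N))^(p^(t+1))))
        + (r:ZMod N)*(n:ZMod N)*(p:ZMod N)^(t+1)
          * (∑ c ∈ Finset.Icc 1 (p-2), (((c:ZMod N))^(p^(t+1)))^(p-2) * (1+((c:ZMod N))^(p^(t+1))) * aZ c) := by
    rw [Finset.mul_sum, Finset.mul_sum, ← Finset.sum_add_distrib]
    exact Finset.sum_congr rfl (fun c _ => by ring)
  have hA8 : ∑ c ∈ Finset.Icc 1 (p-2), (((c:ZMod N))^(p^(t+1)))^(p-2) * (1+((c:ZMod N))^(p^(t+1)))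
      = (p:ZMod N) - 1 := by
    have h1 : ∑ c ∈ Finset.Icc 1 (p-1), (((c:ZMod N))^(p^(t+1)))^(p-2) * (1+((c:ZMod N))^(p^(t+1)))
        = ∑ c ∈ Finset.Icc 1 (p-1), (((c:ZMod N))^(p^(t+1)*(p-2)) + ((c:ZMod N))^(p^(t+1)*(p-1))) := by
      refine Finset.sum_congr rfl (fun c _ => ?_)
      rw [pow_mul, pow_mul, show p-1 = (p-2)+1 by omega, pow_succ]
      ring
    rw [hsplit (fun c => (((c:ZMod N))^(p^(t+1)))^(p-2) * (1+((c:ZMod N))^(p^(t+1))))] at h1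
    rw [Finset.sum_add_distrib, pe8_orth p t hp3 (p-2), pe8_orth p t hp3 (p-1),
      if_neg (fun hd => by have := Nat.le_of_dvd (show 0 < p-2 by omega) hd; omega),
      if_pos dvd_rfl, zero_add] at h1
    rw [hUedge, mul_zero, add_zero] at h1
    exact h1
  have hB : (p:ZMod N)^(t+1) * ((∑ c ∈ Finset.Icc 1 (p-2),
        (((c:ZMod N))^(p^(t+1)))^(p-2) * (1+((c:ZMod N))^(p^(t+1))) * aZ c) + 1) = 0 := by
    have h0 := pe8_stepB p t hp3
    obtain ⟨d, hd⟩ := h0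
    have h1 : ((N:ℕ):ℤ) ∣ (p:ℤ)^(t+1) * ((∑ c ∈ Finset.Icc 1 (p-2),
        ((c:ℤ)^(p^(t+1)))^(p-2) * (1+(c:ℤ)^(p^(t+1))) * (((1+(c:ℤ)^(p^(t+1)))^(p-1) - 1)/p)) + 1) := by
      rw [hNZ]
      exact ⟨d, by rw [hd, pow_succ]; ring⟩
    have h9 := (ZMod.intCast_zmod_eq_zero_iff_dvd _ N).mpr h1
    push_cast at h9
    exact h9
  have hBsum : (p:ZMod N)^(t+1) * (∑ c ∈ Finset.Icc 1 (p-2),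
        (((c:ZMod N))^(p^(t+1)))^(p-2) * (1+((c:ZMod N))^(p^(t+1))) * aZ c) = -(p:ZMod N)^(t+1) := by
    linear_combination hB
  have hmain : ((p:ZMod N)-1) * (SZ + (r:ZMod N))
      = (r:ZMod N)*((p:ZMod N)-1) - (r:ZMod N)*(n:ZMod N)*(p:ZMod N)^(t+1) := by
    rw [hA1, hA3, hA5, hA6', hA7, hA8]
    linear_combination ((r:ZMod N)*(n:ZMod N)) * hBsum
  linear_combination (-1 : ZMod N) * hmain + ((p:ZMod N)*(r:ZMod N))*hrcast
    + ((r:ZMod N)*(n:ZMod N))*hzero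
end

section
/- Let p > 3 be prime and write r = 2 + n(p-1)p^t with t ≥ 0 and n ≥ 0. Then for all i ≥ 3 with i ≤ t+3, Σ_{0<j<r, j≡2 mod (p-1)} C(j,i)·C(r,j) ≡ 0 (mod p^{t+3-i}). -/
/-!
Every summand is divisible by `p ^ (t + 3 - i)`: since `C(j,i) C(r,j) = C(r,i) C(r-i,j-i)`, it
suffices that `p ^ (t + 3 - i) ∣ C(r,i)`. Now `i! C(r,i) = r (r-1) (r-2) ⋯ (r-i+1)` is divisible
by `r - 2`, hence by `p ^ t`, and Legendre's formula bounds `v_p(i!) ≤ (i-1)/(p-1) ≤ i - 3`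
as soon as `p ≥ 4`.
-/

namespace Nat

theorem choose_dvd_choose_mul_choose (r j i : ℕ) : r.choose i ∣ r.choose j * j.choose i := by
  rcases lt_or_ge j i with hji | hij
  · simp [choose_eq_zero_of_lt hji]
  · rw [choose_mul hij]
    exact dvd_mul_right _ _

theorem sub_two_dvd_descFactorial {r i : ℕ} (hi : 3 ≤ i) : r - 2 ∣ r.descFactorial i := by
  rw [← descFactorial_mul_descFactorial hi, descFactorial_succ]
  exact dvd_mul_of_dvd_right (dvd_mul_right _ _) _

theorem padicValNat_factorial_le_sub_three {p i : ℕ} [Fact p.Prime] (hp : 3 < p) (hi : 3 ≤ i) :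
    padicValNat p i ! ≤ i - 3 := by
  have hlegendre := sub_one_mul_padicValNat_factorial_lt_of_ne_zero p (n := i) (by omega)
  have hmul : 3 * padicValNat p i ! ≤ (p - 1) * padicValNat p i ! :=
    Nat.mul_le_mul_right _ (by omega)
  omega

theorem pow_sub_padicValNat_dvd_of_pow_dvd_mul {p t a b : ℕ} [Fact p.Prime] (hb : b ≠ 0)
    (h : p ^ t ∣ b * a) : p ^ (t - padicValNat p b) ∣ a := by
  rcases eq_or_ne a 0 with rfl | ha
  · exact dvd_zero _
  rw [padicValNat_dvd_iff_le (mul_ne_zero hb ha), padicValNat.mul hb ha] at h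
  rw [padicValNat_dvd_iff_le ha]
  omega

theorem pow_dvd_choose_of_pow_dvd_sub_two {p t r i : ℕ} (hp : p.Prime) (hp3 : 3 < p)
    (hr : p ^ t ∣ r - 2) (hi : 3 ≤ i) : p ^ (t + 3 - i) ∣ r.choose i := by
  have := Fact.mk hp
  have hfac : p ^ t ∣ i ! * r.choose i := by
    rw [← descFactorial_eq_factorial_mul_choose]
    exact hr.trans (sub_two_dvd_descFactorial hi)
  have hval := padicValNat_factorial_le_sub_three hp3 hi
  exact (pow_dvd_pow p (by omega)).trans
    (pow_sub_padicValNat_dvd_of_pow_dvd_mul (factorial_ne_zero i) hfac)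

end Nat

theorem stmt_10 (p n t r : ℕ) (hp : p.Prime) (hp3 : 3 < p)
    (hr : r = 2 + n * (p - 1) * p^t) :
    ∀ i : ℕ, 3 ≤ i → i ≤ t + 3 →
      (p : ℤ)^(t + 3 - i) ∣ ∑ j ∈ (Finset.Ioo 0 r).filter
        (fun j => j % (p - 1) = 2 % (p - 1)), (j.choose i : ℤ) * (r.choose j : ℤ) := by
  intro i hi _
  have hr2 : p ^ t ∣ r - 2 := ⟨n * (p - 1), by rw [hr]; ring_nf; omega⟩
  have hchoose := Nat.pow_dvd_choose_of_pow_dvd_sub_two hp hp3 hr2 hi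
  refine Finset.dvd_sum fun j _ => ?_
  rw [mul_comm]
  exact_mod_cast hchoose.trans (Nat.choose_dvd_choose_mul_choose r j i)
end

section
/- Let p > 3 be prime and write s = 1 + n(p-1)p^t with t ≥ 0 and n ≥ 0. Then Σ_{0≤j≤s, j≡1 mod (p-1)} C(s,j) ≡ 1 + n·p^{t+1} (mod p^{t+2}). -/
/-!
The sum is a roots-of-unity filter. If `ω ∈ ℤ/p^(t+2)` is the Teichmüller lift of a primitive
root modulo `p`, then `(p - 1) * ∑_{j ≡ 1} C(s, j) = ∑_i ω^(-i) (1 + ω^i)^s`. Each `1 + ω^i`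
is either `0` or a unit modulo `p`, and every such `u` satisfies
`u ^ (1 + n (p - 1) p^t) ≡ u + n p^t (u^p - u) (mod p^(t+2))`. Hence the filtered sum for `s`
equals the one for `1` plus `n p^t` times the difference of those for `p` and `1`, that is
`1 + n p^t ((p + 1) - 1)`.
-/

open Finset

section BinomialCongruences

variable {R : Type*} [CommRing R] {p : ℕ}

theorem one_add_pow_prime_sub_dvd (hp : p.Prime) (hp2 : p ≠ 2) {r : ℕ} (hr : r ≠ 0) {z : R}
    (hz : (p : R) ^ r ∣ z) : (p : R) ^ (r + 2) ∣ (1 + z) ^ p - (1 + p * z) := by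
  have hexpand :
      (1 + z) ^ p - (1 + p * z) = ∑ k ∈ Ico 2 (p + 1), z ^ k * (p.choose k : R) := by
    have h2p : 2 ≤ p + 1 := by have := hp.two_le; omega
    rw [add_comm, add_pow, ← sum_range_add_sum_Ico _ h2p]
    simp only [sum_range_succ, sum_range_zero, one_pow, mul_one, pow_zero, pow_one,
      Nat.choose_zero_right, Nat.choose_one_right, Nat.cast_one]
    ring
  rw [hexpand]
  refine dvd_sum fun k hk => ?_
  obtain ⟨hk2, hkp⟩ := mem_Ico.mp hk
  rcases (Nat.lt_succ_iff.mp hkp).eq_or_lt with hkp | hkp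
  · rw [hkp]
    have : r + 2 ≤ r * p := by
      have := hp.two_le; have : 1 ≤ r := Nat.one_le_iff_ne_zero.mpr hr
      have : 3 ≤ p := by omega
      nlinarith
    have hzp := pow_dvd_pow_of_dvd hz p
    rw [← pow_mul] at hzp
    exact dvd_mul_of_dvd_left ((pow_dvd_pow _ this).trans hzp) _
  · have hchoose : (p : R) ∣ p.choose k := Nat.cast_dvd_cast (hp.dvd_choose_self (by omega) hkp)
    have hz2 := pow_dvd_pow_of_dvd hz 2
    rw [← pow_mul] at hz2
    have hzk : (p : R) ^ (r + 1) ∣ z ^ k :=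
      (pow_dvd_pow _ (by omega)).trans (hz2.trans (pow_dvd_pow z hk2))
    exact pow_succ (p : R) (r + 1) ▸ mul_dvd_mul hzk hchoose

theorem one_add_pow_prime_pow_sub_dvd (hp : p.Prime) (hp2 : p ≠ 2) {x : R} (hx : (p : R) ∣ x)
    (t : ℕ) : (p : R) ^ (t + 2) ∣ (1 + x) ^ p ^ t - (1 + p ^ t * x) := by
  induction t with
  | zero => simp
  | succ t ih =>
    obtain ⟨w, hw⟩ := ih
    set z := (p : R) ^ t * x + p ^ (t + 2) * w
    have hz : (p : R) ^ (t + 1) ∣ z :=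
      dvd_add (pow_succ (p : R) t ▸ mul_dvd_mul_left _ hx)
        (dvd_mul_of_dvd_left (pow_dvd_pow _ (by omega)) _)
    obtain ⟨v, hv⟩ := one_add_pow_prime_sub_dvd hp hp2 (r := t + 1) (by omega) hz
    have : (1 + x) ^ p ^ (t + 1) = (1 + z) ^ p := by
      rw [pow_succ, pow_mul, sub_eq_iff_eq_add.mp hw]; ring
    rw [this, sub_eq_iff_eq_add.mp hv]
    exact ⟨v + w, by simp only [z]; ring⟩

theorem one_add_pow_of_sq_eq_zero_s11 {d : R} (hd : d ^ 2 = 0) (n : ℕ) :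
    (1 + d) ^ n = 1 + n * d := by
  induction n with
  | zero => simp
  | succ n ih =>
    rw [pow_succ, ih]
    push_cast
    linear_combination (n : R) * hd

/-- `u ^ ((p - 1) * p ^ t) = 1 + D` with `D = p ^ t * (u ^ (p - 1) - 1)` and `D ^ 2 = 0`, so its
`n`-th power is linear in `n`. -/
theorem pow_one_add_mul_sub_one_mul_prime_pow (hp : p.Prime) (hp2 : p ≠ 2) {t : ℕ}
    (hpt : (p : R) ^ (t + 2) = 0) {u : R} (hu : u = 0 ∨ (p : R) ∣ u ^ (p - 1) - 1) (n : ℕ) :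
    u ^ (1 + n * (p - 1) * p ^ t) = u + n * p ^ t * (u ^ p - u) := by
  obtain rfl | ⟨c, hc⟩ := hu
  · simp [hp.ne_zero]
  have hfermat : (u ^ (p - 1)) ^ p ^ t = 1 + p ^ t * (u ^ (p - 1) - 1) := by
    have := one_add_pow_prime_pow_sub_dvd hp hp2 (Dvd.intro c hc.symm) t
    rwa [hpt, zero_dvd_iff, sub_eq_zero, add_sub_cancel] at this
  have hsq : ((p : R) ^ t * (u ^ (p - 1) - 1)) ^ 2 = 0 := by
    rw [hc, show ((p : R) ^ t * (p * c)) ^ 2 = p ^ (t + 2) * (p ^ t * c ^ 2) by ring, hpt,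
      zero_mul]
  have hup : u * u ^ (p - 1) = u ^ p := by rw [← pow_succ', Nat.sub_add_cancel hp.one_le]
  calc u ^ (1 + n * (p - 1) * p ^ t) = u * ((u ^ (p - 1)) ^ p ^ t) ^ n := by
        rw [← pow_mul, ← pow_mul, ← pow_succ']; ring_nf
    _ = u + n * p ^ t * (u ^ p - u) := by
        rw [hfermat, one_add_pow_of_sq_eq_zero_s11 hsq, ← hup]; ring

end BinomialCongruences

section RootsOfUnityFilter

def sumChooseModEq (m r s : ℕ) : ℕ :=
  ∑ j ∈ (range (s + 1)).filter (fun j => j % m = r % m), s.choose j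

theorem Nat.dvd_mul_sub_one_add_iff {m : ℕ} (hm : m ≠ 0) (r j : ℕ) :
    m ∣ r * (m - 1) + j ↔ j % m = r % m := by
  rw [← ZMod.natCast_eq_zero_iff, ← ZMod.natCast_eq_natCast_iff', Nat.cast_add, Nat.cast_mul,
    Nat.cast_sub (Nat.one_le_iff_ne_zero.mpr hm), ZMod.natCast_self,
    ← sub_eq_zero (a := (j : ZMod m))]
  ring_nf

variable {R : Type*} [CommRing R] {m : ℕ} {ω : R}

theorem sum_range_pow_pow_eq_ite (hω : ω ^ m = 1) (hunit : ∀ j, ¬ m ∣ j → IsUnit (ω ^ j - 1))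
    (j : ℕ) : ∑ i ∈ range m, (ω ^ j) ^ i = if m ∣ j then (m : R) else 0 := by
  split_ifs with hj
  · obtain ⟨c, rfl⟩ := hj
    simp [pow_mul, hω]
  · rw [← (hunit j hj).mul_left_eq_zero, geom_sum_mul, ← pow_mul, mul_comm, pow_mul, hω,
      one_pow, sub_self]

theorem sum_range_pow_mul_one_add_pow (hω : ω ^ m = 1)
    (hunit : ∀ j, ¬ m ∣ j → IsUnit (ω ^ j - 1)) (hm : m ≠ 0) (r s : ℕ) :
    ∑ i ∈ range m, ω ^ (i * (r * (m - 1))) * (1 + ω ^ i) ^ s = m * sumChooseModEq m r s := by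
  calc ∑ i ∈ range m, ω ^ (i * (r * (m - 1))) * (1 + ω ^ i) ^ s
      = ∑ j ∈ range (s + 1),
          (s.choose j : R) * ∑ i ∈ range m, (ω ^ (r * (m - 1) + j)) ^ i := by
        simp_rw [mul_sum]
        rw [sum_comm]
        refine sum_congr rfl fun i _ => ?_
        rw [add_comm, add_pow, mul_sum]
        refine sum_congr rfl fun j _ => ?_
        rw [one_pow, mul_one, ← pow_mul, ← pow_mul, mul_comm _ i, mul_add, pow_add]
        ring
    _ = m * sumChooseModEq m r s := by
        simp_rw [sum_range_pow_pow_eq_ite hω hunit, Nat.dvd_mul_sub_one_add_iff hm,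
          sumChooseModEq, Nat.cast_sum, sum_filter, mul_sum]
        refine sum_congr rfl fun j _ => ?_
        split_ifs <;> ring

theorem sumChooseModEq_one {m : ℕ} (hm : 2 ≤ m) : sumChooseModEq m 1 1 = 1 := by
  simp [sumChooseModEq, sum_filter, sum_range_succ, Nat.mod_eq_of_lt (by omega : 1 < m)]

theorem sumChooseModEq_succ {m : ℕ} (hm : 2 ≤ m) : sumChooseModEq m 1 (m + 1) = m + 2 := by
  have h1 : 1 % m = 1 := Nat.mod_eq_of_lt (by omega)
  rw [sumChooseModEq, sum_filter, sum_range_succ, sum_eq_single_of_mem 1 (by simp; omega)]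
  · simp [h1, Nat.add_mod_left]
  · intro j hj hj1
    rcases (Nat.lt_succ_iff.mp (mem_range.mp hj)).eq_or_lt with rfl | hjm
    · simp [h1]
    · simp [Nat.mod_eq_of_lt hjm, h1, hj1]

end RootsOfUnityFilter

section TeichmullerRoots

variable {p : ℕ} [hp : Fact p.Prime] {k : ℕ}

theorem ZMod.natCast_dvd_of_castHom_eq_zero (hk : k ≠ 0) {x : ZMod (p ^ k)}
    (hx : ZMod.castHom (dvd_pow_self p hk) (ZMod p) x = 0) : (p : ZMod (p ^ k)) ∣ x := by
  rw [← ZMod.natCast_zmod_val x, ZMod.castHom_apply, ZMod.cast_natCast (dvd_pow_self p hk),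
    ZMod.natCast_eq_zero_iff] at hx
  obtain ⟨c, hc⟩ := hx
  rw [← ZMod.natCast_zmod_val x, hc, Nat.cast_mul]
  exact dvd_mul_right _ _

theorem ZMod.isUnit_of_castHom_ne_zero (hk : k ≠ 0) {x : ZMod (p ^ k)}
    (hx : ZMod.castHom (dvd_pow_self p hk) (ZMod p) x ≠ 0) : IsUnit x := by
  rw [← ZMod.natCast_zmod_val x,
    ZMod.isUnit_natCast_iff_not_dvd_pow hp.out (Nat.pos_of_ne_zero hk)]
  rwa [← ZMod.natCast_zmod_val x, ZMod.castHom_apply, ZMod.cast_natCast (dvd_pow_self p hk), Ne,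
    ZMod.natCast_eq_zero_iff] at hx

/-- Teichmüller lift of a primitive root `ζ` modulo `p`: `ζ ^ (p ^ (k - 1))` computed in
`ZMod (p ^ k)`. -/
theorem ZMod.exists_pow_eq_one_isPrimitiveRoot_castHom (hk : k ≠ 0) :
    ∃ ω : ZMod (p ^ k), ω ^ (p - 1) = 1 ∧
      IsPrimitiveRoot (ZMod.castHom (dvd_pow_self p hk) (ZMod p) ω) (p - 1) := by
  have : NeZero (p - 1) := ⟨by have := hp.out.two_le; omega⟩
  obtain ⟨ζ, hζ⟩ := HasEnoughRootsOfUnity.exists_primitiveRoot (ZMod p) (p - 1)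
  set π := ZMod.castHom (dvd_pow_self p hk) (ZMod p)
  set a : ZMod (p ^ k) := ((ζ.val : ℕ) : ZMod (p ^ k))
  have hπa : π a = ζ := by simp [a, π]
  have ha : IsUnit a := ZMod.isUnit_of_castHom_ne_zero hk (hπa ▸ hζ.ne_zero (NeZero.ne _))
  refine ⟨a ^ p ^ (k - 1), ?_, by rwa [map_pow, hπa, ZMod.pow_card_pow]⟩
  rw [← pow_mul, ← Nat.totient_prime_pow hp.out (Nat.pos_of_ne_zero hk), ← ha.unit_spec,
    ← Units.val_pow_eq_pow_val, ZMod.pow_totient, Units.val_one]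

variable {ω : ZMod (p ^ k)}

theorem ZMod.isUnit_pow_sub_one_of_isPrimitiveRoot_castHom (hk : k ≠ 0)
    (hω : IsPrimitiveRoot (ZMod.castHom (dvd_pow_self p hk) (ZMod p) ω) (p - 1)) {j : ℕ}
    (hj : ¬ (p - 1) ∣ j) :
    IsUnit (ω ^ j - 1) :=
  ZMod.isUnit_of_castHom_ne_zero hk <| by
    rwa [map_sub, map_pow, map_one, Ne, sub_eq_zero, hω.pow_eq_one_iff_dvd]

theorem ZMod.one_add_pow_eq_zero_or_dvd (hk : k ≠ 0)
    (hω : IsPrimitiveRoot (ZMod.castHom (dvd_pow_self p hk) (ZMod p) ω) (p - 1)) (hp2 : p ≠ 2)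
    (hω1 : ω ^ (p - 1) = 1) (i : ℕ) :
    1 + ω ^ i = 0 ∨ (p : ZMod (p ^ k)) ∣ (1 + ω ^ i) ^ (p - 1) - 1 := by
  set π := ZMod.castHom (dvd_pow_self p hk) (ZMod p)
  by_cases h : π (1 + ω ^ i) = 0
  · left
    have hneg : π ω ^ i = -1 := by
      rw [map_add, map_one, map_pow] at h
      linear_combination h
    have hsq : (ω ^ i) ^ 2 = 1 := by
      obtain ⟨c, hc⟩ := (hω.pow_eq_one_iff_dvd (i * 2)).mp (by rw [pow_mul, hneg, neg_one_sq])
      rw [← pow_mul, hc, pow_mul, hω1, one_pow]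
    have hunit : IsUnit (ω ^ i - 1) := ZMod.isUnit_of_castHom_ne_zero hk <| by
      rw [map_sub, map_pow, hneg, map_one, ← neg_add', neg_ne_zero, one_add_one_eq_two]
      exact Ring.two_ne_zero (by rwa [ZMod.ringChar_zmod_n])
    rw [← hunit.mul_right_eq_zero]
    linear_combination hsq
  · right
    apply ZMod.natCast_dvd_of_castHom_eq_zero hk
    rw [map_sub, map_pow, ZMod.pow_card_sub_one_eq_one h, map_one, sub_self]

end TeichmullerRoots

theorem natCast_sumChooseModEq_zmod_prime_pow {p : ℕ} (hp : p.Prime) (hp2 : p ≠ 2)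
    (n t : ℕ) :
    (sumChooseModEq (p - 1) 1 (1 + n * (p - 1) * p ^ t) : ZMod (p ^ (t + 2))) =
      1 + n * p ^ (t + 1) := by
  have : Fact p.Prime := ⟨hp⟩
  have hk : t + 2 ≠ 0 := by omega
  have hm : 2 ≤ p - 1 := by have := hp.two_le; omega
  obtain ⟨ω, hω1, hω⟩ := ZMod.exists_pow_eq_one_isPrimitiveRoot_castHom (p := p) hk
  set F : ℕ → ZMod (p ^ (t + 2)) :=
    fun e => ∑ i ∈ range (p - 1), ω ^ (i * (1 * (p - 1 - 1))) * (1 + ω ^ i) ^ e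
  have hF : ∀ e, F e = (p - 1 : ℕ) * sumChooseModEq (p - 1) 1 e :=
    sum_range_pow_mul_one_add_pow hω1
      (fun _ => ZMod.isUnit_pow_sub_one_of_isPrimitiveRoot_castHom hk hω) (by omega) 1
  have hpt : (p : ZMod (p ^ (t + 2))) ^ (t + 2) = 0 := by
    exact_mod_cast ZMod.natCast_self (p ^ (t + 2))
  have hlin : F (1 + n * (p - 1) * p ^ t) = F 1 + n * p ^ t * (F p - F 1) := by
    simp only [F, mul_sum, ← sum_sub_distrib, ← sum_add_distrib]
    refine sum_congr rfl fun i _ => ?_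
    rw [pow_one_add_mul_sub_one_mul_prime_pow hp hp2 hpt
      (ZMod.one_add_pow_eq_zero_or_dvd hk hω hp2 hω1 i)]
    ring
  have hFp : F p = (p - 1 : ℕ) * (p + 1 : ℕ) := by
    conv_lhs => rw [← Nat.sub_add_cancel hp.one_le]
    rw [hF, sumChooseModEq_succ hm, show p - 1 + 2 = p + 1 by omega]
  rw [hF, hF, hFp, sumChooseModEq_one hm] at hlin
  have hunit : IsUnit ((p - 1 : ℕ) : ZMod (p ^ (t + 2))) :=
    (ZMod.isUnit_natCast_iff_not_dvd_pow hp (by omega)).mpr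
      fun h => by have := Nat.le_of_dvd (by omega) h; omega
  apply hunit.mul_left_cancel
  rw [hlin]
  push_cast
  ring

theorem stmt_11 (p n t s : ℕ) (hp : p.Prime) (hp3 : 3 < p)
    (hs : s = 1 + n * (p - 1) * p^t) :
    (p : ℤ)^(t + 2) ∣ (∑ j ∈ (Finset.range (s + 1)).filter
        (fun j => j % (p - 1) = 1 % (p - 1)), (s.choose j : ℤ))
      - (1 + (n : ℤ) * (p : ℤ)^(t + 1)) := by
  have h := natCast_sumChooseModEq_zmod_prime_pow hp (by omega) n t
  rw [sumChooseModEq, Nat.cast_sum, ← hs] at h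
  rw [show (p : ℤ) ^ (t + 2) = ((p ^ (t + 2) : ℕ) : ℤ) by push_cast; rfl,
    ← ZMod.intCast_zmod_eq_zero_iff_dvd]
  push_cast
  rw [h, sub_self]
end

section
/- Let p be an odd prime, let μ' denote the set of (p-1)-st roots of unity in Z_p other than -1, and for each ξ ∈ μ' write (1+ξ)^{p-1} = 1 + p·z_ξ with z_ξ ∈ Z_p. Then Σ_{ξ∈μ'} (1+ξ)^2 · z_ξ ≡ -1/2 (mod p), i.e., 2·Σ_{ξ∈μ'} (1+ξ)^2 z_ξ ≡ -1 (mod p). -/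
/-!
Since `p * z ξ = (1 + ξ) ^ (p - 1) - 1`, the sum `p * ∑_{μ'} (1 + ξ) ^ 2 * z ξ` equals
`∑_{μ_{p-1}} ((1 + ξ) ^ (p + 1) - (1 + ξ) ^ 2)`, the term `ξ = -1` being zero. Expanding
binomially, and using that `∑_{μ_{p-1}} ξ ^ k` is `p - 1` or `0` according as `p - 1` divides
`k` or not, this is `(p - 1) * (p + 1).choose 2 = (p ^ 2 - 1) * p / 2`. Hence
`2 * ∑_{μ'} (1 + ξ) ^ 2 * z ξ + 1 = p ^ 2` exactly. That `μ_{p-1}` has `p - 1` elements in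
`ℤ_[p]` comes from Hensel's lemma, which lifts a generator of `(ZMod p)ˣ` to a primitive root of
unity.
-/

open Polynomial Finset

theorem IsPrimitiveRoot.of_map_of_pow_eq_one {M N F : Type*} [CommMonoid M] [CommMonoid N]
    [FunLike F M N] [MonoidHomClass F M N] (f : F) {ζ : M} {n : ℕ} (h : IsPrimitiveRoot (f ζ) n)
    (hζ : ζ ^ n = 1) : IsPrimitiveRoot ζ n :=
  ⟨hζ, fun l hl => h.dvd_of_pow_eq_one l (by rw [← map_pow, hl, map_one])⟩

theorem IsPrimitiveRoot.exists_lift {R : Type*} [CommRing R] {I : Ideal R} [HenselianRing R I]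
    {a₀ : R ⧸ I} {n : ℕ} (ha : IsPrimitiveRoot a₀ n) (hn0 : n ≠ 0)
    (hn : IsUnit (n : R ⧸ I)) :
    ∃ ζ : R, IsPrimitiveRoot ζ n ∧ Ideal.Quotient.mk I ζ = a₀ := by
  obtain ⟨b, rfl⟩ := Ideal.Quotient.mk_surjective a₀
  obtain ⟨ζ, hroot, hζb⟩ := HenselianRing.is_henselian (I := I) (X ^ n - 1)
    (monic_X_pow_sub_C 1 hn0) b
    (by simp [← Ideal.Quotient.eq_zero_iff_mem, ha.pow_eq_one])
    (by simpa [derivative_X_pow] using hn.mul ((ha.isUnit hn0).pow (n - 1)))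
  have hζb : Ideal.Quotient.mk I ζ = Ideal.Quotient.mk I b := Ideal.Quotient.eq.mpr hζb
  have hζn : ζ ^ n = 1 := by simpa [sub_eq_zero] using hroot
  exact ⟨ζ, .of_map_of_pow_eq_one (Ideal.Quotient.mk I) (hζb ▸ ha) hζn, hζb⟩

theorem ZMod.exists_isPrimitiveRoot (p : ℕ) [Fact p.Prime] :
    ∃ g : ZMod p, IsPrimitiveRoot g (p - 1) := by
  obtain ⟨g, hg⟩ := IsCyclic.exists_ofOrder_eq_natCard (α := (ZMod p)ˣ)
  rw [Nat.card_eq_fintype_card, ZMod.card_units p] at hg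
  exact ⟨g, IsPrimitiveRoot.coe_units_iff.mpr (hg ▸ IsPrimitiveRoot.orderOf g)⟩

theorem PadicInt.exists_isPrimitiveRoot (p : ℕ) [Fact p.Prime] :
    ∃ ζ : ℤ_[p], IsPrimitiveRoot ζ (p - 1) := by
  obtain ⟨g, hg⟩ := ZMod.exists_isPrimitiveRoot p
  let ψ : ZMod p →+* ℤ_[p] ⧸ IsLocalRing.maximalIdeal ℤ_[p] :=
    PadicInt.residueField.symm.toRingHom
  have hunit : IsUnit ((p - 1 : ℕ) : ZMod p) := by
    rw [ZMod.isUnit_iff_coprime]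
    exact (Nat.coprime_self_sub_left (Fact.out : p.Prime).one_le).mpr (Nat.coprime_one_left p)
  obtain ⟨ζ, hζ, -⟩ := (hg.map_of_injective ψ.injective).exists_lift
    (Nat.sub_ne_zero_of_lt (Fact.out : p.Prime).one_lt) (by simpa using hunit.map ψ)
  exact ⟨ζ, hζ⟩

-- The sum on the right is `1` unless `n = 2`, where both sides gain a further term `1`.
theorem Nat.sum_choose_add_two_filter_dvd {n : ℕ} (hn : 2 ≤ n) :
    ∑ k ∈ (range (n + 3)).filter (n ∣ ·), (n + 2).choose k =
      ∑ k ∈ (range 3).filter (n ∣ ·), Nat.choose 2 k + (n + 2).choose 2 := by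
  rcases hn.eq_or_lt with rfl | hn
  · decide
  have hbig : (range (n + 3)).filter (n ∣ ·) = {0, n} := by
    ext k
    simp only [mem_filter, mem_range, mem_insert, mem_singleton]
    constructor
    · rintro ⟨hk, j, rfl⟩
      rcases j with _ | _ | j
      · simp
      · simp
      · nlinarith
    · rintro (rfl | rfl) <;> simp
  have hsmall : (range 3).filter (n ∣ ·) = {0} := by
    ext k
    simp only [mem_filter, mem_range, mem_singleton]
    constructor
    · rintro ⟨hk, hdvd⟩
      by_contra hk0
      exact absurd (Nat.le_of_dvd (by omega) hdvd) (by omega)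
    · rintro rfl; simp
  rw [hbig, hsmall, sum_pair (by omega), sum_singleton, Nat.choose_symm_add]
  simp

namespace IsPrimitiveRoot

variable {R : Type*} [CommRing R] [IsDomain R] {ζ : R} {n : ℕ}

theorem nthRootsFinset_one_eq_image [DecidableEq R] (hζ : IsPrimitiveRoot ζ n) :
    nthRootsFinset n (1 : R) = (range n).image (ζ ^ ·) := by
  rcases n.eq_zero_or_pos with rfl | hn
  · simp
  symm
  refine eq_of_subset_of_card_le (fun x hx => ?_) ?_
  · obtain ⟨i, -, rfl⟩ := mem_image.mp hx
    exact (Polynomial.mem_nthRootsFinset hn 1).mpr (by rw [pow_right_comm, hζ.pow_eq_one, one_pow])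
  · rw [hζ.card_nthRootsFinset,
      card_image_of_injOn fun i hi j hj => hζ.pow_inj (mem_range.mp hi) (mem_range.mp hj),
      card_range]

theorem sum_nthRootsFinset_pow (hζ : IsPrimitiveRoot ζ n) (k : ℕ) :
    ∑ ξ ∈ nthRootsFinset n (1 : R), ξ ^ k = if n ∣ k then (n : R) else 0 := by
  classical
  rw [hζ.nthRootsFinset_one_eq_image,
    sum_image fun i hi j hj => hζ.pow_inj (mem_range.mp hi) (mem_range.mp hj)]
  simp_rw [← pow_mul, mul_comm _ k, pow_mul]
  split_ifs with hk
  · simp [(hζ.pow_eq_one_iff_dvd k).mpr hk]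
  · have hne : ζ ^ k - 1 ≠ 0 := sub_ne_zero.mpr fun h => hk ((hζ.pow_eq_one_iff_dvd k).mp h)
    apply mul_right_cancel₀ hne
    rw [geom_sum_mul, ← pow_mul, mul_comm, pow_mul, hζ.pow_eq_one, one_pow, sub_self, zero_mul]

theorem sum_nthRootsFinset_one_add_pow (hζ : IsPrimitiveRoot ζ n) (m : ℕ) :
    ∑ ξ ∈ nthRootsFinset n (1 : R), (1 + ξ) ^ m =
      n * ∑ k ∈ (range (m + 1)).filter (n ∣ ·), (m.choose k : R) := by
  simp_rw [add_comm (1 : R), add_pow, one_pow, mul_one]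
  rw [sum_comm, mul_sum, sum_filter]
  refine sum_congr rfl fun k _ => ?_
  rw [← sum_mul, hζ.sum_nthRootsFinset_pow]
  split_ifs <;> simp

theorem sum_nthRootsFinset_one_add_pow_add_two_sub (hζ : IsPrimitiveRoot ζ n) (hn : 2 ≤ n) :
    ∑ ξ ∈ nthRootsFinset n (1 : R), ((1 + ξ) ^ (n + 2) - (1 + ξ) ^ 2) =
      (n : R) * (n + 2).choose 2 := by
  have hchoose := congrArg (Nat.cast : ℕ → R) (Nat.sum_choose_add_two_filter_dvd hn)
  push_cast at hchoose
  rw [sum_sub_distrib, hζ.sum_nthRootsFinset_one_add_pow, hζ.sum_nthRootsFinset_one_add_pow,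
    ← mul_sub, hchoose]
  ring

end IsPrimitiveRoot

theorem stmt_19 (p : ℕ) [Fact p.Prime] (hp : 2 < p)
    (S : Finset ℤ_[p]) (hS : ∀ ξ : ℤ_[p], ξ ∈ S ↔ (ξ^(p - 1) = 1 ∧ ξ ≠ -1))
    (z : ℤ_[p] → ℤ_[p]) (hz : ∀ ξ ∈ S, (1 + ξ)^(p - 1) = 1 + (p : ℤ_[p]) * z ξ) :
    (p : ℤ_[p]) ∣ 2 * (∑ ξ ∈ S, (1 + ξ)^2 * z ξ) + 1 := by
  classical
  obtain ⟨ζ, hζ⟩ := PadicInt.exists_isPrimitiveRoot p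
  have hneg_one : (-1 : ℤ_[p]) ^ (p - 1) = 1 :=
    (Nat.Odd.sub_odd ((Fact.out : p.Prime).odd_of_ne_two hp.ne') odd_one).neg_one_pow
  have hnotS : (-1 : ℤ_[p]) ∉ S := fun h => ((hS _).mp h).2 rfl
  have hroots : insert (-1) S = nthRootsFinset (p - 1) (1 : ℤ_[p]) := by
    ext ξ
    rw [mem_insert, hS, Polynomial.mem_nthRootsFinset (by omega)]
    constructor
    · rintro (rfl | ⟨h, -⟩) <;> assumption
    · intro h
      by_cases hξ : ξ = -1 <;> simp [hξ, h]
  have hsum : (p : ℤ_[p]) * ∑ ξ ∈ S, (1 + ξ) ^ 2 * z ξ =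
      ∑ ξ ∈ insert (-1) S, ((1 + ξ) ^ (p - 1 + 2) - (1 + ξ) ^ 2) := by
    rw [sum_insert hnotS, add_neg_cancel, zero_pow (by omega), zero_pow (by omega), sub_zero,
      zero_add, mul_sum]
    refine sum_congr rfl fun ξ hξ => ?_
    rw [pow_add, hz ξ hξ]
    ring
  rw [hroots, hζ.sum_nthRootsFinset_one_add_pow_add_two_sub (by omega),
    show p - 1 + 2 = p + 1 by omega] at hsum
  have hchoose : ((p + 1).choose 2 : ℤ_[p]) * 2 = (p + 1) * p :=
    mod_cast (Nat.add_one_mul_choose_eq p 1).symm.trans (by simp)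
  have hsq : 2 * (∑ ξ ∈ S, (1 + ξ) ^ 2 * z ξ) + 1 = (p : ℤ_[p]) ^ 2 := by
    refine mul_left_cancel₀ (Nat.cast_ne_zero.mpr (Fact.out : p.Prime).ne_zero) ?_
    rw [Nat.cast_sub (by omega)] at hsum
    linear_combination 2 * hsum + (p - 1 : ℤ_[p]) * hchoose
  exact hsq ▸ dvd_pow_self _ two_ne_zero
end
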